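/- arXiv:1902.08177 — 6 statements merged into one kernel-verified Lean document; each statement's English description precedes it below -/
import Mathlib

section
/- Let s and n be natural numbers with 1 ≤ s ≤ n−1 and let κ be an infinite cardinal (viewed as an ordinal). Then the Specker graph G(κ, t^n_s) has κ many vertices and its chromatic number is exactly κ. -/
/-!
The vertices of `G(κ, t)` are finite subsets of `κ`, and `α ↦ {α, α + 1, …, α + n - 1}` injects
`κ` into them, so there are `κ` vertices and colouring each vertex by itself uses `κ` colours.

For the lower bound, take a colouring with fewer than `θ` colours, `θ ≤ κ` regular. By
regularity, some colour `γ` can be forced in the game where the opponent bounds each new point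
from below: otherwise every colour has its own losing bound, and a point above the supremum
of these bounds leads to a contradiction. Running two copies of the game at once, one for the
`0`-part and one for the `1`-part of `t`, and always playing the next point of `t` in the
copy it belongs to, produces two disjoint vertices of type `t` with the same colour `γ`.
-/

open Cardinal

/-- `a` and `b` (each of size `n`) realize the disjoint type `t : 2n → 2`: listing `a ∪ b` in
increasing order as `α₀ < … < α_{2n-1}`, `a = {αᵢ : t i = 0}` and `b = {αᵢ : t i = 1}`. -/
def HasType (n : ℕ) (a b : Finset Ordinal) (t : Fin (2 * n) → Fin 2) : Prop :=
  a.card = n ∧ b.card = n ∧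
    ∃ h : (a ∪ b).card = 2 * n,
      ∀ i : Fin (2 * n), (((a ∪ b).orderIsoOfFin h i : Ordinal) ∈ a ↔ t i = 0)

/-- The disjoint type `t^n_s`: `s` zeros, then `n - s` copies of the block `01`,
then `s` ones. -/
def specialType (n s : ℕ) : Fin (2 * n) → Fin 2 := fun i =>
  if (i : ℕ) < s then 0
  else if 2 * n - s ≤ (i : ℕ) then 1
  else if ((i : ℕ) - s) % 2 = 0 then 0 else 1

/-- The vertex set of the Specker graph `G(α, t)`: `n`-element sets of ordinals `< α`. -/
def SpeckerVerts (α : Ordinal) (n : ℕ) : Type _ :=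
  {x : Finset Ordinal // x.card = n ∧ ∀ β ∈ x, β < α}

/-- The Specker graph `G(α, t)`: vertices are `n`-element subsets of `α`; distinct `a, b`
are adjacent iff they are disjoint and `tp(a,b) = t` or `tp(b,a) = t`. -/
def SpeckerGraph (α : Ordinal) (n : ℕ) (t : Fin (2 * n) → Fin 2) :
    SimpleGraph (SpeckerVerts α n) where
  Adj a b := a ≠ b ∧ Disjoint a.1 b.1 ∧ (HasType n a.1 b.1 t ∨ HasType n b.1 a.1 t)
  symm := ⟨fun a b ⟨hne, hd, ht⟩ => ⟨hne.symm, hd.symm, ht.symm⟩⟩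
  loopless := ⟨fun a h => h.1 rfl⟩

open Finset

universe u

theorem image_filter_fin_cons {α σ : Type*} [DecidableEq α] [DecidableEq σ] {m : ℕ} (x : α)
    (e : Fin m → α) (t : Fin (m + 1) → σ) (v : σ) :
    ({i | t i = v} : Finset _).image (Fin.cons x e : Fin (m + 1) → α) =
      if t 0 = v then insert x (({i | t i.succ = v} : Finset _).image e)
      else ({i | t i.succ = v} : Finset _).image e := by
  ext y
  simp only [mem_image, mem_filter, mem_univ, true_and, Fin.exists_fin_succ, Fin.cons_zero,
    Fin.cons_succ]
  split_ifs with h <;> simp [h, eq_comm]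

section Ramsey

variable {β : Type u} (c : Finset Ordinal.{u} → β) (o : Ordinal.{u})

/-- `γ ∈ reachableColors c o r p` says that in the game where `r` points are added to `p` one at a
time, each above an arbitrary bound `b < o` chosen by the opponent, we can force the final set
to have colour `γ`. -/
def reachableColors : ℕ → Finset Ordinal → Set β
  | 0, p => {c p}
  | r + 1, p => {γ | ∀ b < o, ∃ x, b < x ∧ x < o ∧ γ ∈ reachableColors r (insert x p)}

variable {c o}

theorem reachableColors_nonempty (ho : Order.IsSuccLimit o) (hβ : #β < o.cof) (r : ℕ)
    (p : Finset Ordinal) : (reachableColors c o r p).Nonempty := by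
  induction r generalizing p with
  | zero => exact Set.singleton_nonempty _
  | succ r ih =>
    by_contra hempty
    have hbound : ∀ γ, ∃ b < o, ∀ x, b < x → x < o → γ ∉ reachableColors c o r (insert x p) := by
      simpa [reachableColors, Set.not_nonempty_iff_eq_empty, Set.eq_empty_iff_forall_notMem]
        using hempty
    choose g hgo hg using hbound
    have hsup : Order.succ (⨆ γ, g γ) < o := ho.succ_lt (Ordinal.iSup_lt_of_lt_cof hβ hgo)
    obtain ⟨γ, hγ⟩ := ih (insert (Order.succ (⨆ γ, g γ)) p)
    exact hg γ _ ((Ordinal.le_iSup g γ).trans_lt (Order.lt_succ _)) hsup hγ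

theorem exists_strictMono_of_mem_reachableColors {σ : Type*} [DecidableEq σ] {γ : β} :
    ∀ {m : ℕ} (t : Fin m → σ) (p : σ → Finset Ordinal) (b : Ordinal), b < o →
    (∀ v, γ ∈ reachableColors c o #{i | t i = v} (p v)) →
    ∃ e : Fin m → Ordinal, StrictMono e ∧ (∀ i, b < e i ∧ e i < o) ∧
      ∀ v, c (p v ∪ ({i | t i = v} : Finset _).image e) = γ
  | 0, t, p, b, _, hγ => ⟨Fin.elim0, fun i => i.elim0, fun i => i.elim0, fun v => by
      simpa [reachableColors, eq_comm] using hγ v⟩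
  | m + 1, t, p, b, hb, hγ => by
    have hγ₀ := hγ (t 0)
    rw [Fin.card_filter_univ_succ, if_pos rfl] at hγ₀
    obtain ⟨x, hbx, hxo, hγx⟩ := hγ₀ b hb
    set p' := Function.update p (t 0) (insert x (p (t 0)))
    have hγ' : ∀ v, γ ∈ reachableColors c o #{i : Fin m | t i.succ = v} (p' v) := by
      intro v
      rcases eq_or_ne v (t 0) with rfl | hv
      · simpa [p'] using hγx
      · simpa [p', Function.update_of_ne hv, Fin.card_filter_univ_succ, Ne.symm hv] using hγ v
    obtain ⟨e, he, heo, hec⟩ :=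
      exists_strictMono_of_mem_reachableColors (fun i => t i.succ) p' x hxo hγ'
    refine ⟨Fin.cons x e, Fin.strictMono_cons.2 ⟨fun j => (heo j).1, he⟩,
      Fin.cases ⟨hbx, hxo⟩ fun j => ⟨hbx.trans (heo j).1, (heo j).2⟩, fun v => ?_⟩
    rw [image_filter_fin_cons, ← hec v]
    rcases eq_or_ne v (t 0) with rfl | hv
    · simp [p', insert_union]
    · simp [p', Function.update_of_ne hv, Ne.symm hv]

end Ramsey

theorem hasType_image_of_strictMono {n : ℕ} {t : Fin (2 * n) → Fin 2}
    (ht : ∀ v, (univ.filter (t · = v)).card = n)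
    {e : Fin (2 * n) → Ordinal} (he : StrictMono e) :
    HasType n ((univ.filter (t · = 0)).image e) ((univ.filter (t · = 1)).image e) t := by
  set A := (univ.filter (t · = 0)).image e
  set B := (univ.filter (t · = 1)).image e
  have hunion : A ∪ B = univ.image e := by
    rw [← image_union, ← filter_or, filter_true_of_mem fun i _ => by omega]
  have hcard : (A ∪ B).card = 2 * n := by
    rw [hunion, card_image_of_injective _ he.injective, card_fin]
  have horder : ∀ i, ((A ∪ B).orderIsoOfFin hcard i : Ordinal) = e i := fun i => by
    rw [coe_orderIsoOfFin_apply,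
      ← orderEmbOfFin_unique hcard (fun j => hunion ▸ mem_image_of_mem e (mem_univ j)) he]
  refine ⟨by rw [card_image_of_injective _ he.injective, ht],
    by rw [card_image_of_injective _ he.injective, ht], hcard, fun i => ?_⟩
  rw [horder, he.injective.mem_finset_image, mem_filter]
  exact and_iff_right (mem_univ i)

theorem specialType_rev_eq_zero_iff {n s : ℕ} (hs : s ≤ n) (i : Fin (2 * n)) :
    specialType n s i.rev = 0 ↔ specialType n s i = 1 := by
  simp only [specialType, Fin.val_rev]
  split_ifs <;> omega

theorem card_filter_specialType {n s : ℕ} (hs : s ≤ n) (v : Fin 2) :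
    (univ.filter (specialType n s · = v)).card = n := by
  have hrev : (univ.filter (specialType n s · = 1)).card =
      (univ.filter (specialType n s · = 0)).card :=
    card_bij (fun i _ => i.rev) (by simp [specialType_rev_eq_zero_iff hs])
      (fun _ _ _ _ => Fin.rev_inj.1)
      (fun j hj => ⟨j.rev, by simpa [← specialType_rev_eq_zero_iff hs] using hj, Fin.rev_rev j⟩)
  have htotal : (univ.filter (specialType n s · = 1)).card +
      (univ.filter (specialType n s · = 0)).card = 2 * n := by
    have hsplit := card_filter_add_card_filter_not (s := univ) (specialType n s · = 1)
    have hnot : univ.filter (fun i => ¬specialType n s i = 1) =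
        univ.filter (specialType n s · = 0) :=
      filter_congr fun i _ => by omega
    rwa [card_univ, Fintype.card_fin, hnot] at hsplit
  rcases (by omega : v = 0 ∨ v = 1) with rfl | rfl <;> omega

theorem speckerGraph_adj_of_hasType {o : Ordinal} {n : ℕ} (hn : n ≠ 0) {t : Fin (2 * n) → Fin 2}
    {a b : SpeckerVerts o n} (hab : Disjoint a.1 b.1) (ht : HasType n a.1 b.1 t) :
    (SpeckerGraph o n t).Adj a b := by
  refine ⟨fun h => ?_, hab, Or.inl ht⟩
  rw [h, disjoint_self_iff_empty] at hab
  exact hn (b.2.1 ▸ hab ▸ card_empty)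

theorem speckerGraph_coloring_isEmpty {o : Ordinal.{u}} {n : ℕ} (hn : n ≠ 0)
    {t : Fin (2 * n) → Fin 2} (ht : ∀ v, (univ.filter (t · = v)).card = n) {θ : Cardinal.{u}}
    (hθ : θ.IsRegular) (hθo : θ.ord ≤ o) {β : Type u} (hβ : #β < θ) :
    IsEmpty ((SpeckerGraph o n t).Coloring β) := by
  refine ⟨fun C => ?_⟩
  -- Colouring non-vertices by `none` avoids having to produce a default colour.
  let c : Finset Ordinal → Option β := fun x =>
    if h : x.card = n ∧ ∀ y ∈ x, y < o then some (C ⟨x, h⟩) else none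
  have hθlim := Cardinal.isSuccLimit_ord hθ.aleph0_le
  have hcolors : #(Option β) < θ.ord.cof := by
    rw [hθ.cof_ord, mk_option]
    exact add_lt_of_lt hθ.aleph0_le hβ (one_lt_aleph0.trans_le hθ.aleph0_le)
  obtain ⟨γ, hγ⟩ := reachableColors_nonempty (c := c) hθlim hcolors n ∅
  obtain ⟨e, he, heθ, hec⟩ := exists_strictMono_of_mem_reachableColors t (fun _ => ∅)
    0 hθlim.bot_lt fun v => by rwa [ht v]
  have htype := hasType_image_of_strictMono ht he
  have hvert : ∀ v, ((univ.filter (t · = v)).image e).card = n ∧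
      ∀ y ∈ (univ.filter (t · = v)).image e, y < o := fun v =>
    ⟨by rw [card_image_of_injective _ he.injective, ht], by
      simp only [mem_image]
      rintro y ⟨i, -, rfl⟩
      exact (heθ i).2.trans_le hθo⟩
  have hdisj : Disjoint ((univ.filter (t · = 0)).image e) ((univ.filter (t · = 1)).image e) :=
    (disjoint_image he.injective).2 (disjoint_filter.2 fun i _ h => by simp [h])
  apply C.valid
    (speckerGraph_adj_of_hasType (a := ⟨_, hvert 0⟩) (b := ⟨_, hvert 1⟩) hn hdisj htype)
  have hc0 := hec 0
  have hc1 := hec 1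
  simp only [empty_union, c, dif_pos (hvert 0), dif_pos (hvert 1)] at hc0 hc1
  exact Option.some_injective _ (hc0.trans hc1.symm)

theorem mk_speckerVerts {o : Ordinal.{u}} (ho : Order.IsSuccLimit o) {n : ℕ} (hn : n ≠ 0) :
    #(SpeckerVerts o n) = lift.{u + 1} o.card := by
  have hIio : #(Set.Iio o) = lift.{u + 1} o.card := mk_Iio_ordinal o
  have hinf : Infinite (Set.Iio o) := by
    rw [infinite_iff, hIio, ← lift_aleph0.{u + 1, u}, lift_le, Ordinal.aleph0_le_card]
    exact Ordinal.omega0_le_of_isSuccLimit ho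
  apply le_antisymm
  · calc #(SpeckerVerts o n) ≤ #{x : Finset Ordinal // ∀ y ∈ x, y < o} :=
          mk_le_of_injective (f := fun x => ⟨x.1, x.2.2⟩) fun _ _ h =>
            Subtype.ext (Subtype.mk.inj h)
      _ = #(Finset (Set.Iio o)) := (mk_congr (Equiv.finsetSubtypeComm (· < o))).symm
      _ = lift.{u + 1} o.card := by rw [mk_finset_of_infinite, hIio]
  · rw [← hIio]
    let block (a : Ordinal) : Finset Ordinal := (range n).image fun k : ℕ => a + k
    have mem_block {a b : Ordinal} : b ∈ block a ↔ ∃ k < n, a + k = b := by simp [block]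
    have hblock (a : Set.Iio o) : (block a).card = n ∧ ∀ y ∈ block a, y < o := by
      refine ⟨?_, fun y hy => ?_⟩
      · exact (card_image_of_injective _ ((add_right_injective a.1).comp Nat.cast_injective)).trans
          (card_range n)
      · obtain ⟨k, -, rfl⟩ := mem_block.1 hy
        exact Ordinal.lt_sub.1
          (Ordinal.natCast_lt_of_isSuccLimit (Ordinal.isSuccLimit_sub ho.isSuccPrelimit a.2) k)
    refine mk_le_of_injective (f := fun a => ⟨block a, hblock a⟩) fun a b hab => ?_
    have hab : block a = block b := Subtype.mk.inj hab
    have hle {a b : Ordinal} (h : a ∈ block b) : b ≤ a := by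
      obtain ⟨k, -, rfl⟩ := mem_block.1 h
      exact le_self_add
    have hself (a : Ordinal) : a ∈ block a := mem_block.2 ⟨0, Nat.pos_of_ne_zero hn, add_zero a⟩
    exact Subtype.ext (le_antisymm (hle (hab ▸ hself b)) (hle (hab.symm ▸ hself a)))

theorem exists_isRegular_between {c κ : Cardinal} (hκ : ℵ₀ ≤ κ) (hc : c < κ) :
    ∃ θ : Cardinal, θ.IsRegular ∧ c < θ ∧ θ ≤ κ := by
  rcases lt_or_ge c ℵ₀ with hc₀ | hc₀
  · exact ⟨ℵ₀, isRegular_aleph0, hc₀, hκ⟩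
  · exact ⟨Order.succ c, isRegular_succ hc₀, Order.lt_succ_of_not_isMax (not_isMax c),
      Order.succ_le_of_lt hc⟩

/-- For `1 ≤ s ≤ n - 1` and an infinite cardinal `κ`, the Specker graph `G(κ, t^n_s)` has
`κ` many vertices and chromatic number exactly `κ`. -/
theorem specker_graph_card_and_chromatic (s n : ℕ) (hs : 1 ≤ s) (hsn : s ≤ n - 1)
    (κ : Cardinal.{0}) (hκ : Cardinal.aleph0 ≤ κ) :
    Cardinal.mk (SpeckerVerts κ.ord n) = Cardinal.lift.{1} κ ∧
    (∃ β : Type, Cardinal.mk β = κ ∧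
      Nonempty ((SpeckerGraph κ.ord n (specialType n s)).Coloring β)) ∧
    (∀ β : Type, Cardinal.mk β < κ →
      IsEmpty ((SpeckerGraph κ.ord n (specialType n s)).Coloring β)) := by
  have hn : n ≠ 0 := by omega
  have hcard : #(SpeckerVerts κ.ord n) = lift.{1} κ := by
    rw [mk_speckerVerts (isSuccLimit_ord hκ) hn, card_ord]
  refine ⟨hcard, ⟨κ.out, mk_out κ, ?_⟩, fun β hβ => ?_⟩
  · obtain ⟨e⟩ := (lift_mk_eq'.{1, 0} (α := SpeckerVerts κ.ord n) (β := κ.out)).1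
      (by rw [lift_uzero, hcard, mk_out])
    exact ⟨(SpeckerGraph _ _ _).recolorOfEquiv e (SpeckerGraph _ _ _).selfColoring⟩
  · obtain ⟨θ, hθ, hβθ, hθκ⟩ := exists_isRegular_between hκ hβ
    exact speckerGraph_coloring_isEmpty hn (card_filter_specialType (by omega)) hθ
      (ord_le_ord.2 hθκ) hβθ
end

section
/- Let s and n be natural numbers with 1 ≤ s ≤ n−1 and suppose n ≥ 2s² + 1. Then for every ordinal α, the Specker graph G(α, t^n_s) contains no odd cycle of length 2s + 1 or shorter. -/
open Cardinal

/-!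
Enumerate each vertex `a` of a closed walk increasingly as `a₀ < a₁ < ⋯`. If `tp(a, b) = t^n_s`
then `aᵢ < bⱼ` whenever `i ≤ j + s`, and `bⱼ < aᵢ` whenever `j + s < i`. So, following the walk
and carrying an index along, the index may drop by up to `s` across a forward edge (`tp(a, b)`)
and must rise by at least `s + 1` across a backward edge, while the enumerated ordinal strictly
increases. Reversing the order of the ordinals swaps forward and backward edges, so in an odd
closed walk of length at most `2s + 1` we may assume that forward edges are in the majority,
whence there are `q ≤ s` backward edges. Letting only the first `q + 1` forward edges drop the
index by `s` gives an index path of oscillation at most `s (s + 1) < n` that ends no higher than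
it starts: the ordinal enumerated at the end is both larger and not larger than at the start.
-/

section Interlaced

variable {β : Type*} [LinearOrder β] {n s : ℕ}

/-- The relative position of `a` and `b` when `tp(a, b) = t^n_s`, read off their increasing
enumerations `f` and `g`. -/
def Interlaced (s : ℕ) (f g : Fin n → β) : Prop :=
  (∀ i j : Fin n, (i : ℕ) ≤ j + s → f i < g j) ∧ ∀ i j : Fin n, (j : ℕ) + s < i → g j < f i

theorem Interlaced.dual {f g : Fin n → β} (h : Interlaced s f g) :
    Interlaced s (OrderDual.toDual ∘ g ∘ Fin.rev) (OrderDual.toDual ∘ f ∘ Fin.rev) :=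
  ⟨fun i j hij => h.1 j.rev i.rev (by simp only [Fin.val_rev]; omega),
    fun i j hij => h.2 j.rev i.rev (by simp only [Fin.val_rev]; omega)⟩

end Interlaced

theorem HasType.interlaced_specialType {n s : ℕ} {a b : Finset Ordinal} (hsn : s ≤ n)
    (h : HasType n a b (specialType n s)) :
    Interlaced s (a.orderEmbOfFin h.1) (b.orderEmbOfFin h.2.1) := by
  obtain ⟨ha, hb, hab, hmem⟩ := h
  set e := (a ∪ b).orderEmbOfFin hab
  have mem_a : ∀ x, e x ∈ a ↔ specialType n s x = 0 := fun x => by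
    simpa only [Finset.coe_orderIsoOfFin_apply] using hmem x
  have mem_b : ∀ x, specialType n s x = 1 → e x ∈ b := fun x hx =>
    (Finset.mem_union.1 (Finset.orderEmbOfFin_mem _ hab x)).resolve_left
      fun hxa => by simp [(mem_a x).1 hxa] at hx
  -- positions of the `i`-th zero and of the `j`-th one of `t^n_s`
  let posA : Fin n → Fin (2 * n) := fun i =>
    ⟨if (i : ℕ) < s then i else 2 * i - s, by split <;> omega⟩
  let posB : Fin n → Fin (2 * n) := fun j =>
    ⟨if (j : ℕ) < n - s then 2 * j + s + 1 else n + j, by split <;> omega⟩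
  have hA : ⇑(a.orderEmbOfFin ha) = e ∘ posA := by
    refine (Finset.orderEmbOfFin_unique ha (fun i => (mem_a _).2 ?_)
      (e.strictMono.comp fun i i' hi => ?_)).symm
    · simp only [specialType, posA]; split_ifs <;> first | rfl | omega
    · simp only [posA, Fin.mk_lt_mk]; rw [Fin.lt_def] at hi; split_ifs <;> omega
  have hB : ⇑(b.orderEmbOfFin hb) = e ∘ posB := by
    refine (Finset.orderEmbOfFin_unique hb (fun j => mem_b _ ?_)
      (e.strictMono.comp fun j j' hj => ?_)).symm
    · simp only [specialType, posB]; split_ifs <;> first | rfl | omega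
    · simp only [posB, Fin.mk_lt_mk]; rw [Fin.lt_def] at hj; split_ifs <;> omega
  refine ⟨fun i j hij => ?_, fun i j hij => ?_⟩ <;>
  · simp only [hA, hB, Function.comp_apply]
    apply e.strictMono
    simp only [posA, posB, Fin.mk_lt_mk]
    split_ifs <;> omega

theorem Nat.count_add_count_not (p : ℕ → Prop) [DecidablePred p] (n : ℕ) :
    Nat.count p n + Nat.count (fun k => ¬ p k) n = n := by
  simp only [Nat.count_eq_card_filter_range, Finset.card_filter_add_card_filter_not,
    Finset.card_range]

section Potential

variable {n s ℓ : ℕ} (d : ℕ → Prop) [DecidablePred d]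

theorem exists_potential (hq : Nat.count (fun k => ¬ d k) ℓ ≤ s)
    (hmaj : Nat.count (fun k => ¬ d k) ℓ < Nat.count d ℓ) :
    ∃ D : ℕ → ℤ, (∀ k, d k → D k ≤ D (k + 1) + s) ∧ (∀ k, ¬ d k → D (k + 1) = D k + s + 1) ∧
      D ℓ ≤ D 0 ∧ ∀ k ≤ ℓ, ∀ k' ≤ ℓ, D k' - D k ≤ s * (s + 1) := by
  set q := Nat.count (fun k => ¬ d k) ℓ
  set up := Nat.count (fun k => ¬ d k)
  set down := fun k => min (Nat.count d k) (q + 1)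
  have hup_le : ∀ k ≤ ℓ, up k ≤ q := fun k hk => Nat.count_monotone _ hk
  have hdown_le : ∀ k, down k ≤ q + 1 := fun k => min_le_right _ _
  have hdown_mono : Monotone down := (Nat.count_monotone d).min monotone_const
  refine ⟨fun k => (s + 1) * up k - s * down k, fun k hk => ?_, fun k hk => ?_, ?_, ?_⟩
  · have hup : up (k + 1) = up k := by simp [up, Nat.count_succ, hk]
    have hdown : down (k + 1) ≤ down k + 1 := by simp [down, Nat.count_succ, hk]
    have : (s : ℤ) * down (k + 1) ≤ s * down k + s := by
      exact_mod_cast (Nat.mul_le_mul_left s hdown).trans_eq (by ring)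
    simp only [hup]; linarith
  · have hup : up (k + 1) = up k + 1 := by simp [up, Nat.count_succ, hk]
    have hdown : down (k + 1) = down k := by simp [down, Nat.count_succ, hk]
    simp only [hup, hdown]; push_cast; ring
  · have hup0 : up 0 = 0 := Nat.count_zero _
    have hdown0 : down 0 = 0 := by simp [down]
    have hdown : down ℓ = q + 1 := min_eq_right hmaj
    simp only [hup0, hdown0, hdown, show up ℓ = q from rfl]
    push_cast
    nlinarith
  · intro k hk k' hk'
    have h1 := hup_le k hk; have h2 := hup_le k' hk'
    have h3 := hdown_le k; have h4 := hdown_le k'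
    rcases le_total k k' with hkk' | hk'k
    · have h5 := Nat.count_monotone (fun k => ¬ d k) hkk'
      have h6 := hdown_mono hkk'
      push_cast
      nlinarith
    · have h5 := Nat.count_monotone (fun k => ¬ d k) hk'k
      push_cast
      nlinarith

theorem exists_index_path (hn : s * (s + 1) < n) (hq : Nat.count (fun k => ¬ d k) ℓ ≤ s)
    (hmaj : Nat.count (fun k => ¬ d k) ℓ < Nat.count d ℓ) :
    ∃ j : ℕ → Fin n, (∀ k < ℓ, d k → (j k : ℕ) ≤ j (k + 1) + s) ∧
      (∀ k < ℓ, ¬ d k → (j k : ℕ) + s < j (k + 1)) ∧ j ℓ ≤ j 0 := by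
  obtain ⟨D, hdown, hup, hclosed, hosc⟩ := exists_potential d hq hmaj
  obtain ⟨m, hm, hmin⟩ := (Finset.range (ℓ + 1)).exists_min_image D ⟨0, by simp⟩
  have hm : m ≤ ℓ := Nat.lt_succ_iff.1 (Finset.mem_range.1 hm)
  have hbounds : ∀ k ≤ ℓ, D m ≤ D k ∧ D k - D m ≤ s * (s + 1) := fun k hk =>
    ⟨hmin k (Finset.mem_range.2 (Nat.lt_succ_of_le hk)), hosc m hm k hk⟩
  have hsn : ((s * (s + 1) : ℕ) : ℤ) < n := by exact_mod_cast hn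
  push_cast at hsn
  refine ⟨fun k => ⟨min (D k - D m).toNat (n - 1), by omega⟩, fun k hk hdk => ?_,
    fun k hk hdk => ?_, ?_⟩
  · have := hbounds k hk.le; have := hbounds (k + 1) hk; have := hdown k hdk
    simp only; omega
  · have := hbounds k hk.le; have := hbounds (k + 1) hk; have := hup k hdk
    simp only; omega
  · have := hbounds ℓ le_rfl; have := hbounds 0 (Nat.zero_le _)
    rw [Fin.mk_le_mk]; omega

end Potential

section Cycle

variable {β : Type*} [LinearOrder β] {n s ℓ : ℕ}

theorem not_interlaced_cycle_of_count_lt (hn : s * (s + 1) < n) (F : ℕ → Fin n → β)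
    (hF : ∀ k, Monotone (F k)) (hclosed : F ℓ = F 0) (d : ℕ → Prop) [DecidablePred d]
    (hfwd : ∀ k < ℓ, d k → Interlaced s (F k) (F (k + 1)))
    (hbwd : ∀ k < ℓ, ¬ d k → Interlaced s (F (k + 1)) (F k))
    (hq : Nat.count (fun k => ¬ d k) ℓ ≤ s)
    (hmaj : Nat.count (fun k => ¬ d k) ℓ < Nat.count d ℓ) : False := by
  obtain ⟨j, hjf, hjb, hjl⟩ := exists_index_path d hn hq hmaj
  have hchain : StrictMonoOn (fun k => F k (j k)) (Set.Iic ℓ) :=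
    strictMonoOn_Iic_of_lt_succ fun k hk => by
      rw [Order.succ_eq_add_one]
      by_cases hdk : d k
      exacts [(hfwd k hk hdk).1 _ _ (hjf k hk hdk), (hbwd k hk hdk).2 _ _ (hjb k hk hdk)]
  have hℓ : 0 < ℓ := (Nat.zero_le _).trans_lt (hmaj.trans_le (Nat.count_le _))
  have hcycle : F 0 (j 0) < F ℓ (j ℓ) :=
    hchain (Set.mem_Iic.2 (Nat.zero_le ℓ)) Set.self_mem_Iic hℓ
  exact (hF 0 hjl).not_gt (hclosed ▸ hcycle)

theorem not_interlaced_cycle (hn : s * (s + 1) < n) (F : ℕ → Fin n → β)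
    (hF : ∀ k, Monotone (F k)) (hodd : Odd ℓ) (hℓ : ℓ ≤ 2 * s + 1) (hclosed : F ℓ = F 0)
    (hstep : ∀ k < ℓ, Interlaced s (F k) (F (k + 1)) ∨ Interlaced s (F (k + 1)) (F k)) :
    False := by
  classical
  set d := fun k => Interlaced s (F k) (F (k + 1))
  have hsum := Nat.count_add_count_not d ℓ
  have hne : Nat.count d ℓ ≠ Nat.count (fun k => ¬ d k) ℓ := by
    rintro h; obtain ⟨m, rfl⟩ := hodd; omega
  have hcount_not_not : Nat.count (fun k => ¬¬ d k) ℓ = Nat.count d ℓ := by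
    congr 1; ext k; exact not_not
  rcases hne.lt_or_gt with hlt | hlt
  · refine not_interlaced_cycle_of_count_lt hn (fun k => OrderDual.toDual ∘ F k ∘ Fin.rev)
      (fun k => (hF k).dual_right.comp Fin.rev_anti) (by rw [hclosed])
      (fun k => ¬ d k) (fun k hk hdk => ((hstep k hk).resolve_left hdk).dual)
      (fun k _ hdk => (not_not.1 hdk).dual) (by omega) (by omega)
  · exact not_interlaced_cycle_of_count_lt hn F hF hclosed d (fun _ _ => id)
      (fun k hk hdk => (hstep k hk).resolve_left hdk) (by omega) hlt

end Cycle

theorem specker_graph_no_short_odd_cycles_general (s n : ℕ) (hn : 2 * s ^ 2 + 1 ≤ n) (α : Ordinal) :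
    ∀ (v : SpeckerVerts α n) (c : (SpeckerGraph α n (specialType n s)).Walk v v),
      c.IsCycle → Odd c.length → 2 * s + 1 < c.length := by
  intro v c _ hodd
  refine lt_of_not_ge fun hshort => ?_
  have hn' : s * (s + 1) < n := by nlinarith
  have hsn : s ≤ n := (Nat.le_mul_of_pos_right s s.succ_pos).trans hn'.le
  refine not_interlaced_cycle hn' (fun k => (c.getVert k).1.orderEmbOfFin (c.getVert k).2.1)
    (fun k => OrderEmbedding.monotone _) hodd hshort (by simp) fun k hk => ?_
  obtain ⟨-, -, h | h⟩ := c.adj_getVert_succ hk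
  exacts [.inl (h.interlaced_specialType hsn), .inr (h.interlaced_specialType hsn)]

/-- For `1 ≤ s ≤ n - 1` with `n ≥ 2s² + 1`, for every ordinal `α` the Specker graph
`G(α, t^n_s)` contains no odd cycle of length `2s + 1` or shorter. -/
theorem specker_graph_no_short_odd_cycles (s n : ℕ) (hs : 1 ≤ s) (hsn : s ≤ n - 1)
    (hn : 2 * s ^ 2 + 1 ≤ n) (α : Ordinal) :
    ∀ (v : SpeckerVerts α n) (c : (SpeckerGraph α n (specialType n s)).Walk v v),
      c.IsCycle → Odd c.length → 2 * s + 1 < c.length :=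
  specker_graph_no_short_odd_cycles_general s n hn α
end

section
/- (Shelah) Suppose κ < λ are regular cardinals with κ⁺ < λ, and S ⊆ S^λ_κ is stationary in λ. Then there exists a club-guessing sequence on S. -/
open Cardinal

/-- `D` is club (closed and unbounded) in the limit ordinal `l`. -/
def IsClubIn (D : Set Ordinal) (l : Ordinal) : Prop :=
  D ⊆ Set.Iio l ∧
  (∀ a < l, ∃ b ∈ D, a < b) ∧
  (∀ a < l, a ≠ 0 → sSup (D ∩ Set.Iio a) = a → a ∈ D)

/-- `S` is stationary in `l`: it meets every club subset of `l`. -/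
def IsStationaryIn (S : Set Ordinal) (l : Ordinal) : Prop :=
  ∀ D : Set Ordinal, IsClubIn D l → (S ∩ D).Nonempty

/-- The order type of a set of ordinals. -/
noncomputable def setOtp (A : Set Ordinal) : Ordinal :=
  Ordinal.type ((· < ·) : A → A → Prop)

/-!
Fix clubs `e α ⊆ α` of order type `κ` for `α ∈ S`. Projecting `e α` onto a club `E ⊆ λ`, i.e.
sending `ξ` to `max (E ∩ [0, ξ])`, gives a club in `α` of order type `κ` inside `E` whenever `α`
is a limit point of `E`. If no `E` made these projections guess clubs, every club `E` would come
with clubs `D_E, F_E` such that the projection onto `E` at `α ∈ S ∩ F_E` is never inside `D_E`.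
Iterating `E ↦ E ∩ acc E ∩ D_E ∩ F_E` for `κ⁺` steps and taking `α ∈ S` in the last club, every
step strictly lowers the projection of some `ξ ∈ e α`. A decreasing sequence of ordinals drops
only finitely often, so the `κ⁺` steps would be covered by `κ · ℵ₀ = κ` drops.
-/

universe u

open Set Filter Topology

theorem accPt_iff_sSup_eq {E : Set Ordinal} {a : Ordinal} :
    AccPt a (𝓟 E) ↔ a ≠ 0 ∧ sSup (E ∩ Iio a) = a := by
  rw [SuccOrder.accPt_principal, isMin_iff_eq_bot]
  refine and_congr_right fun ha => ⟨fun h => ?_, fun h b hb => ?_⟩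
  · refine le_antisymm (csSup_le' fun x hx => hx.2.le) (le_of_forall_lt fun b hb => ?_)
    obtain ⟨x, hxE, hbx, hxa⟩ := h b hb
    exact hbx.trans_le (le_csSup ⟨a, fun y hy => hy.2.le⟩ ⟨hxE, hxa⟩)
  · rw [← h] at hb
    obtain ⟨x, ⟨hxE, hxa⟩, hbx⟩ := (lt_csSup_iff ⟨a, fun y hy => hy.2.le⟩
      (nonempty_iff_ne_empty.2 fun h0 => ha (by rw [← h, h0, csSup_empty]))).1 hb
    exact ⟨x, hxE, hbx, hxa⟩

theorem isClubIn_iff_accPt {D : Set Ordinal} {l : Ordinal} :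
    IsClubIn D l ↔ D ⊆ Iio l ∧ (∀ a < l, ∃ b ∈ D, a < b) ∧ ∀ a < l, AccPt a (𝓟 D) → a ∈ D := by
  simp only [IsClubIn, accPt_iff_sSup_eq, and_imp]

namespace IsClubIn

variable {D : Set Ordinal} {l : Ordinal}

theorem mem_of_accPt (hD : IsClubIn D l) {a : Ordinal} (hal : a < l) (ha : AccPt a (𝓟 D)) :
    a ∈ D :=
  (isClubIn_iff_accPt.1 hD).2.2 a hal ha

theorem sSup_mem (hD : IsClubIn D l) {s : Set Ordinal} (hsD : s ⊆ D) (hs : s.Nonempty)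
    (hsl : sSup s < l) : sSup s ∈ D := by
  by_cases hmem : sSup s ∈ s
  · exact hsD hmem
  have hbdd : BddAbove s := ⟨l, fun x hx => (hD.1 (hsD hx)).le⟩
  have hlt : ∀ x ∈ s, x < sSup s := fun x hx =>
    (le_csSup hbdd hx).lt_of_ne fun h => hmem (h ▸ hx)
  refine hD.mem_of_accPt hsl (AccPt.mono ?_ (monotone_principal hsD))
  obtain ⟨x, hx⟩ := hs
  refine SuccOrder.accPt_principal.2 ⟨not_isMin_iff.2 ⟨x, hlt x hx⟩, fun b hb => ?_⟩
  obtain ⟨y, hy, hby⟩ := (lt_csSup_iff hbdd ⟨x, hx⟩).1 hb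
  exact ⟨y, hy, hby, hlt y hy⟩

end IsClubIn

theorem exists_forall_accPt_gt {l : Ordinal.{u}} (hl : ℵ₀ < l.cof) {ι : Type u}
    (hι : #ι < l.cof) {E : ι → Set Ordinal.{u}} (hE : ∀ j, IsClubIn (E j) l) {a : Ordinal}
    (ha : a < l) : ∃ b, a < b ∧ b < l ∧ ∀ j, AccPt b (𝓟 (E j)) := by
  have hlim : Order.IsSuccLimit l := Ordinal.one_lt_cof_iff.1 (one_lt_aleph0.trans hl)
  have hnext : ∀ j x, ∃ y, x < l → y ∈ E j ∧ x < y := fun j x => by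
    by_cases hx : x < l
    · obtain ⟨y, hy, hxy⟩ := (hE j).2.1 x hx
      exact ⟨y, fun _ => ⟨hy, hxy⟩⟩
    · exact ⟨0, fun h => absurd h hx⟩
  choose next hnext using hnext
  -- Interleaving the successor function makes the common closure point strictly above `a`.
  let f : Option ι → Ordinal → Ordinal := fun o x => o.elim (x + 1) (next · x)
  have hf : ∀ o, ∀ x < l, f o x < l := by
    rintro (_ | j) x hx
    · exact hlim.succ_lt hx
    · exact (hE j).1 (hnext j x hx).1
  have hι' : Cardinal.lift.{u} #(Option ι) < l.cof := by
    rw [Cardinal.lift_id, mk_option]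
    exact add_lt_of_lt hl.le hι (one_lt_aleph0.trans hl)
  have hb : Ordinal.nfpFamily f a < l := Ordinal.nfpFamily_lt_ord_lift hl hι' hf ha
  have hsucc_le : ∀ L, List.foldr f a L + 1 ≤ Ordinal.nfpFamily f a := fun L =>
    Ordinal.foldr_le_nfpFamily f a (none :: L)
  refine ⟨_, (lt_add_one a).trans_le (hsucc_le []), hb, fun j => ?_⟩
  refine SuccOrder.accPt_principal.2 ⟨not_isMin_iff.2 ⟨a, (lt_add_one a).trans_le (hsucc_le [])⟩,
    fun c hc => ?_⟩
  obtain ⟨L, hcL⟩ := Ordinal.lt_nfpFamily_iff.1 hc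
  have hL : List.foldr f a L < l := (Ordinal.foldr_le_nfpFamily f a L).trans_lt hb
  obtain ⟨hmem, hlt⟩ := hnext j _ hL
  exact ⟨_, hmem, hcL.trans hlt, (lt_add_one _).trans_le (hsucc_le (some j :: L))⟩

section Intersections

variable {l : Ordinal.{u}}

theorem isClubIn_Iio_inter_iInter (hl : ℵ₀ < l.cof) {ι : Type u} (hι : #ι < l.cof)
    {E : ι → Set Ordinal.{u}} (hE : ∀ j, IsClubIn (E j) l) : IsClubIn (Iio l ∩ ⋂ j, E j) l := by
  refine isClubIn_iff_accPt.2 ⟨inter_subset_left, fun a ha => ?_, fun a ha hacc => ⟨ha, ?_⟩⟩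
  · obtain ⟨b, hab, hbl, hb⟩ := exists_forall_accPt_gt hl hι hE ha
    exact ⟨b, ⟨hbl, mem_iInter.2 fun j => (hE j).mem_of_accPt hbl (hb j)⟩, hab⟩
  · refine mem_iInter.2 fun j => (hE j).mem_of_accPt ha (hacc.mono (monotone_principal ?_))
    exact inter_subset_right.trans (iInter_subset _ j)

theorem IsClubIn.inter (hl : ℵ₀ < l.cof) {D E : Set Ordinal.{u}} (hD : IsClubIn D l)
    (hE : IsClubIn E l) : IsClubIn (D ∩ E) l := by
  have h := isClubIn_Iio_inter_iInter hl (ι := ULift.{u} Bool)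
    ((lt_aleph0_of_finite _).trans hl) (E := fun b => cond b.down D E) (fun b => by
      cases b with | up b => cases b <;> assumption)
  have hDE : Iio l ∩ ⋂ b : ULift.{u} Bool, cond b.down D E = D ∩ E := by
    ext x
    simp only [mem_inter_iff, mem_iInter, ULift.forall, Bool.forall_bool, cond_false, cond_true]
    exact ⟨fun h => ⟨h.2.2, h.2.1⟩, fun h => ⟨hD.1 h.1, h.2, h.1⟩⟩
  rwa [hDE] at h

theorem IsClubIn.inter_accPt (hl : ℵ₀ < l.cof) {E : Set Ordinal.{u}} (hE : IsClubIn E l) :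
    IsClubIn (E ∩ {a | AccPt a (𝓟 E)}) l := by
  refine isClubIn_iff_accPt.2 ⟨inter_subset_left.trans hE.1, fun a ha => ?_, fun a ha hacc => ?_⟩
  · obtain ⟨b, hab, hbl, hb⟩ := exists_forall_accPt_gt hl (ι := PUnit)
      ((lt_aleph0_of_finite _).trans hl) (fun _ => hE) ha
    exact ⟨b, ⟨hE.mem_of_accPt hbl (hb ⟨⟩), hb ⟨⟩⟩, hab⟩
  · have hEacc : AccPt a (𝓟 E) := hacc.mono (monotone_principal inter_subset_left)
    exact ⟨hE.mem_of_accPt ha hEacc, hEacc⟩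

end Intersections

section OrderType

variable {A B : Set Ordinal.{u}}

theorem setOtp_le_of_strictMonoOn {g : Ordinal.{u} → Ordinal.{u}} (hg : StrictMonoOn g A)
    (hAB : MapsTo g A B) : setOtp A ≤ setOtp B :=
  Ordinal.type_le_iff'.2
    ⟨(OrderEmbedding.ofStrictMono (hAB.restrict g A B) fun x y h => hg x.2 y.2 h).ltEmbedding⟩

theorem setOtp_mono (h : A ⊆ B) : setOtp A ≤ setOtp B :=
  setOtp_le_of_strictMonoOn (strictMono_id.strictMonoOn A) h

theorem setOtp_image_le {g : Ordinal.{u} → Ordinal.{u}} (hg : MonotoneOn g A) :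
    setOtp (g '' A) ≤ setOtp A := by
  have hfiber : ∀ y ∈ g '' A, sInf (A ∩ g ⁻¹' {y}) ∈ A ∩ g ⁻¹' {y} := fun y ⟨x, hx, hxy⟩ =>
    csInf_mem ⟨x, hx, hxy⟩
  refine setOtp_le_of_strictMonoOn (fun y hy y' hy' hlt => ?_) fun y hy => (hfiber y hy).1
  by_contra! hle
  have h := hg (hfiber y' hy').1 (hfiber y hy).1 hle
  rw [(hfiber y hy).2, (hfiber y' hy').2] at h
  exact h.not_gt hlt

theorem setOtp_range_of_strictMono {o : Ordinal.{u}} {f : Iio o → Ordinal.{u}}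
    (hf : StrictMono f) : setOtp (range f) = Ordinal.lift.{u + 1} o := by
  rw [setOtp, ← (hf.orderIso f).ordinalType_congr, Ordinal.type_lt_Iio]

theorem lift_ord_cof_le_setOtp {C : Set Ordinal.{u}} {α : Ordinal.{u}} (hCα : C ⊆ Iio α)
    (hC : ∀ a < α, ∃ b ∈ C, a < b) : Ordinal.lift.{u + 1} α.cof.ord ≤ setOtp C := by
  rw [Cardinal.lift_ord, Cardinal.ord_le, setOtp, Ordinal.card_type, Ordinal.lift_cof]
  by_contra! h
  obtain ⟨b, hb, hsup⟩ := hC _ (Ordinal.sSup_add_one_lt_of_lt_cof h fun i hi => hCα hi)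
  have hbdd : BddAbove ((· + 1) '' C) := ⟨α, by
    rintro _ ⟨c, hc, rfl⟩
    exact Order.add_one_le_iff.2 (hCα hc)⟩
  exact (lt_add_one b).not_ge ((le_csSup hbdd ⟨b, hb, rfl⟩).trans hsup.le)

end OrderType

theorem setOtp_Iio_inter_closure_le {A : Set Ordinal.{u}} {α : Ordinal.{u}}
    (hA : ∀ a < α, ∃ b ∈ A, a < b) : setOtp (Iio α ∩ closure A) ≤ setOtp A := by
  have hnext : ∀ x < α, sInf (A ∩ Ioi x) ∈ A ∩ Ioi x := fun x hx =>
    let ⟨b, hb, hxb⟩ := hA x hx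
    csInf_mem ⟨b, hb, hxb⟩
  refine setOtp_le_of_strictMonoOn (g := fun x => sInf (A ∩ Ioi x))
    (fun x hx y hy hxy => ?_) fun x hx => (hnext x hx.1).1
  -- Between two points of the closure there is a point of `A`.
  obtain ⟨a, haA, hxa, hay⟩ : ∃ a ∈ A, x < a ∧ a ≤ y := by
    by_cases hyA : y ∈ A
    · exact ⟨y, hyA, hxy, le_rfl⟩
    have hacc : AccPt y (𝓟 A) := by
      rw [accPt_principal_iff_clusterPt, sdiff_singleton_eq_self hyA]
      exact mem_closure_iff_clusterPt.1 hy.2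
    obtain ⟨a, haA, hxa, hay⟩ := (SuccOrder.accPt_principal.1 hacc).2 x hxy
    exact ⟨a, haA, hxa, hay.le⟩
  exact (csInf_le' (s := A ∩ Ioi x) ⟨haA, hxa⟩).trans_lt (hay.trans_lt (hnext y hy.1).2)

theorem exists_isClubIn_setOtp_eq (α : Ordinal.{u}) (hα : Order.IsSuccPrelimit α) :
    ∃ C, IsClubIn C α ∧ setOtp C = Ordinal.lift.{u + 1} α.cof.ord := by
  obtain ⟨f, hf⟩ := Ordinal.exists_isFundamentalSeq (o := α) rfl
  set A : Set Ordinal := range fun i => (f i : Ordinal)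
  have hAα : A ⊆ Iio α := by
    rintro _ ⟨i, rfl⟩
    exact (f i).2
  have hA : ∀ a < α, ∃ b ∈ A, a < b := fun a ha => by
    obtain ⟨_, ⟨i, rfl⟩, hi⟩ := hf.isCofinal_range ⟨a + 1, hα.succ_lt ha⟩
    exact ⟨f i, ⟨i, rfl⟩, (lt_add_one a).trans_le hi⟩
  have hC : IsClubIn (Iio α ∩ closure A) α := by
    refine isClubIn_iff_accPt.2 ⟨inter_subset_left, fun a ha => ?_, fun a ha hacc => ⟨ha, ?_⟩⟩
    · obtain ⟨b, hb, hab⟩ := hA a ha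
      exact ⟨b, ⟨hAα hb, subset_closure hb⟩, hab⟩
    · exact isClosed_iff_accPt.1 isClosed_closure a
        (hacc.mono (monotone_principal inter_subset_right))
  refine ⟨_, hC, le_antisymm ?_ (lift_ord_cof_le_setOtp hC.1 hC.2.1)⟩
  calc setOtp (Iio α ∩ closure A) ≤ setOtp A := setOtp_Iio_inter_closure_le hA
    _ = _ := setOtp_range_of_strictMono ((Subtype.strictMono_coe _).comp hf.strictMono)

section Projection

noncomputable def supIic (E : Set Ordinal) (ξ : Ordinal) : Ordinal :=
  sSup (E ∩ Iic ξ)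

/-- Deleting `0` discards the junk value `supIic E ξ = sSup ∅ = 0` at the points `ξ < min E`. -/
def clubProj (E C : Set Ordinal) : Set Ordinal :=
  supIic E '' C \ {0}

variable {E E' C : Set Ordinal.{u}} {l ξ : Ordinal.{u}}

theorem supIic_le : supIic E ξ ≤ ξ :=
  csSup_le' fun _ hx => hx.2

theorem le_supIic {x : Ordinal} (hx : x ∈ E) (hxξ : x ≤ ξ) : x ≤ supIic E ξ :=
  le_csSup ⟨ξ, fun _ hy => hy.2⟩ ⟨hx, hxξ⟩

theorem supIic_monotone : Monotone (supIic E) := fun _ _ h =>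
  csSup_le' fun _ hx => le_supIic hx.1 (hx.2.trans h)

theorem supIic_mono_left (h : E' ⊆ E) : supIic E' ξ ≤ supIic E ξ :=
  csSup_le' fun _ hx => le_supIic (h hx.1) hx.2

theorem IsClubIn.supIic_mem (hE : IsClubIn E l) (hξ : ξ < l) (h0 : supIic E ξ ≠ 0) :
    supIic E ξ ∈ E :=
  hE.sSup_mem inter_subset_left
    (nonempty_iff_ne_empty.2 fun h => h0 (by rw [supIic, h, csSup_empty]; rfl))
    (supIic_le.trans_lt hξ)

theorem supIic_lt_of_notMem {D : Set Ordinal} (hE' : IsClubIn E' l) (hE'E : E' ⊆ E)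
    (hE'D : E' ⊆ D) (hξ : ξ < l) (h0 : supIic E ξ ≠ 0) (hD : supIic E ξ ∉ D) :
    supIic E' ξ < supIic E ξ := by
  refine (supIic_mono_left hE'E).lt_of_ne fun h => hD ?_
  rw [← h] at h0 ⊢
  exact hE'D (hE'.supIic_mem hξ h0)

theorem setOtp_clubProj_le : setOtp (clubProj E C) ≤ setOtp C :=
  (setOtp_mono sdiff_subset).trans (setOtp_image_le (supIic_monotone.monotoneOn C))

theorem isClubIn_clubProj {α : Ordinal} (hE : IsClubIn E l) (hαl : α < l)
    (hαE : AccPt α (𝓟 E)) (hC : IsClubIn C α) : IsClubIn (clubProj E C) α := by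
  have hsubE : clubProj E C ⊆ E := by
    rintro _ ⟨⟨ξ, hξ, rfl⟩, h0⟩
    exact hE.supIic_mem ((hC.1 hξ).trans hαl) h0
  refine isClubIn_iff_accPt.2 ⟨?_, fun a ha => ?_, fun a ha hacc => ?_⟩
  · rintro _ ⟨⟨ξ, hξ, rfl⟩, -⟩
    exact supIic_le.trans_lt (hC.1 hξ)
  · obtain ⟨η, hηE, haη, hηα⟩ := (SuccOrder.accPt_principal.1 hαE).2 a ha
    obtain ⟨ξ, hξ, hηξ⟩ := hC.2.1 η hηα
    have hlt : a < supIic E ξ := haη.trans_le (le_supIic hηE hηξ.le)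
    exact ⟨_, ⟨⟨ξ, hξ, rfl⟩, (zero_le.trans_lt hlt).ne'⟩, hlt⟩
  -- `a` is the projection of `sup {ξ ∈ C | supIic E ξ < a}`, which lies in `C`.
  have haE : a ∈ E := hE.mem_of_accPt (ha.trans hαl) (hacc.mono (monotone_principal hsubE))
  obtain ⟨ha0, hbelow⟩ := SuccOrder.accPt_principal.1 hacc
  set T := {ξ ∈ C | supIic E ξ < a}
  have hTa : ∀ ξ ∈ T, ξ < a := fun ξ hξ => not_le.1 fun h => (le_supIic haE h).not_gt hξ.2
  have hT : T.Nonempty := by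
    obtain ⟨b, hb⟩ := not_isMin_iff.1 ha0
    obtain ⟨_, ⟨⟨ξ, hξ, rfl⟩, -⟩, -, hξa⟩ := hbelow b hb
    exact ⟨ξ, hξ, hξa⟩
  have hTsup : sSup T ≤ a := csSup_le' fun ξ hξ => (hTa ξ hξ).le
  have hproj : supIic E (sSup T) = a := by
    refine le_antisymm (supIic_le.trans hTsup) (le_of_forall_lt fun b hb => ?_)
    obtain ⟨_, ⟨⟨ξ, hξ, rfl⟩, -⟩, hbξ, hξa⟩ := hbelow b hb
    exact hbξ.trans_le (supIic_monotone (le_csSup ⟨a, fun η hη => (hTa η hη).le⟩ ⟨hξ, hξa⟩))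
  refine ⟨⟨sSup T, hC.sSup_mem (fun ξ hξ => hξ.1) hT (hTsup.trans_lt ha), hproj⟩, ?_⟩
  rintro rfl
  exact ha0 isMin_bot

end Projection

theorem exists_chain_isClubIn {l o : Ordinal.{u}} (hl : ℵ₀ < l.cof) (ho : o.card < l.cof)
    (step : Set Ordinal.{u} → Set Ordinal.{u})
    (hstep : ∀ E, IsClubIn E l → IsClubIn (step E) l) :
    ∃ G : Ordinal.{u} → Set Ordinal.{u},
      (∀ i j, i < j → G j ⊆ step (G i)) ∧ ∀ i ≤ o, IsClubIn (G i) l := by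
  obtain ⟨G, hG⟩ : ∃ G : Ordinal → Set Ordinal, ∀ i, G i = Iio l ∩ ⋂ j : Iio i, step (G j) :=
    ⟨_, fun i => WellFounded.fix_eq Ordinal.lt_wf
      (fun i G => Iio l ∩ ⋂ j : Iio i, step (G j j.2)) i⟩
  refine ⟨G, fun i j hij => ?_, fun i => ?_⟩
  · rw [hG j]
    exact inter_subset_right.trans (iInter_subset (fun k : Iio j => step (G k)) ⟨i, hij⟩)
  induction i using WellFoundedLT.induction with
  | _ i IH =>
    intro hi
    rw [hG i, ← (Ordinal.ToType.mk (o := i)).symm.surjective.iInter_comp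
      fun j : Iio i => step (G j)]
    refine isClubIn_Iio_inter_iInter hl ?_ fun t => hstep _ (IH _ (Ordinal.ToType.mk.symm t).2 ?_)
    · rw [mk_toType]
      exact (Ordinal.card_le_card hi).trans_lt ho
    · exact (Ordinal.ToType.mk.symm t).2.le.trans hi

theorem finite_setOf_lt_of_antitone {v : Ordinal.{u} → Ordinal.{u}} (hv : Antitone v) :
    {i | v (i + 1) < v i}.Finite := by
  have hanti : StrictAnti fun i : {i | v (i + 1) < v i} => v i := fun i j hij =>
    (hv (Order.add_one_le_of_lt hij)).trans_lt i.2
  have := hanti.wellFoundedGT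
  exact finite_coe_iff.1 (Finite.of_wellFoundedLT_wellFoundedGT _)

theorem mk_le_mul_aleph0_of_forall_exists_lt {X : Type (u + 1)} {s : Set Ordinal.{u}}
    (v : X → Ordinal.{u} → Ordinal.{u}) (hv : ∀ x, Antitone (v x))
    (hs : ∀ i ∈ s, ∃ x, v x (i + 1) < v x i) : #s ≤ #X * ℵ₀ :=
  calc #s ≤ #(⋃ x, {i | v x (i + 1) < v x i}) :=
        mk_le_mk_of_subset fun i hi => mem_iUnion.2 (hs i hi)
    _ ≤ #X * ⨆ x, #{i | v x (i + 1) < v x i} := mk_iUnion_le _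
    _ ≤ #X * ℵ₀ := by
      gcongr
      exact ciSup_le' fun x => (finite_setOf_lt_of_antitone (hv x)).lt_aleph0.le

open Classical in
noncomputable def clubProjSeq (e : Ordinal → Set Ordinal) (E : Set Ordinal) (α : Ordinal) :
    Set Ordinal :=
  if AccPt α (𝓟 E) then clubProj E (e α) else e α

theorem isClubIn_clubProjSeq {e : Ordinal.{u} → Set Ordinal.{u}} {E : Set Ordinal.{u}}
    {l α : Ordinal.{u}} (hE : IsClubIn E l) (hαl : α < l)
    (he : IsClubIn (e α) α ∧ setOtp (e α) = Ordinal.lift.{u + 1} α.cof.ord) :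
    IsClubIn (clubProjSeq e E α) α ∧
      setOtp (clubProjSeq e E α) = Ordinal.lift.{u + 1} α.cof.ord := by
  unfold clubProjSeq
  split_ifs with hαE
  · have hC := isClubIn_clubProj hE hαl hαE he.1
    exact ⟨hC, le_antisymm (setOtp_clubProj_le.trans he.2.le) (lift_ord_cof_le_setOtp hC.1 hC.2.1)⟩
  · exact he

theorem exists_isClubIn_forall_isStationaryIn_clubProjSeq {κ : Cardinal.{u}} {l : Ordinal.{u}}
    (hκ : ℵ₀ ≤ κ) (hl : Order.succ κ < l.cof) {S : Set Ordinal.{u}} (hS : IsStationaryIn S l)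
    {e : Ordinal.{u} → Set Ordinal.{u}}
    (he : ∀ α ∈ S, e α ⊆ Iio α ∧ #(e α) ≤ Cardinal.lift.{u + 1} κ) :
    ∃ E, IsClubIn E l ∧
      ∀ D, IsClubIn D l → IsStationaryIn {α ∈ S | clubProjSeq e E α ⊆ D} l := by
  by_contra! hfail
  simp only [IsStationaryIn, not_forall, not_nonempty_iff_eq_empty, exists_prop] at hfail
  choose! D hD F hF hDF using hfail
  have hl₀ : ℵ₀ < l.cof := (hκ.trans_lt (Order.lt_succ_of_not_isMax (not_isMax κ))).trans hl
  set o := (Order.succ κ).ord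
  obtain ⟨G, hGstep, hGclub⟩ := exists_chain_isClubIn hl₀ (o := o) (by rwa [card_ord])
    (fun E => (E ∩ {a | AccPt a (𝓟 E)}) ∩ (D E ∩ F E))
    fun E hE => (hE.inter_accPt hl₀).inter hl₀ ((hD E hE).inter hl₀ (hF E hE))
  have hGanti : Antitone G := fun i j hij => by
    rcases hij.eq_or_lt with rfl | hij
    · rfl
    · exact (hGstep i j hij).trans (inter_subset_left.trans inter_subset_left)
  obtain ⟨α, hαS, hαG⟩ := hS _ (hGclub o le_rfl)
  have hαl : α < l := (hGclub o le_rfl).1 hαG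
  -- At each stage the failure of `G i` to guess is witnessed by a point of `e α` whose projection
  -- drops strictly at the next stage.
  have hdrop : ∀ i ∈ Iio o, ∃ ξ : e α, supIic (G (i + 1)) ξ < supIic (G i) ξ := by
    intro i hi
    obtain ⟨⟨-, hαacc⟩, -, hαF⟩ := hGstep i o hi hαG
    have hnot : ¬clubProjSeq e (G i) α ⊆ D (G i) := fun hsub =>
      (hDF (G i) (hGclub i hi.le)).subset ⟨⟨hαS, hsub⟩, hαF⟩
    rw [clubProjSeq, if_pos (c := AccPt α (𝓟 (G i))) hαacc] at hnot
    obtain ⟨_, ⟨⟨ξ, hξ, rfl⟩, h0⟩, hξD⟩ := not_subset.1 hnot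
    have hi1 : i + 1 < o := (isSuccLimit_ord (hκ.trans (Order.le_succ κ))).succ_lt hi
    exact ⟨⟨ξ, hξ⟩, supIic_lt_of_notMem (hGclub _ hi1.le) (hGanti (lt_add_one i).le)
      ((hGstep i _ (lt_add_one i)).trans (inter_subset_right.trans inter_subset_left))
      (((he α hαS).1 hξ).trans hαl) h0 hξD⟩
  have hcard := mk_le_mul_aleph0_of_forall_exists_lt (fun ξ : e α => fun i => supIic (G i) ξ)
    (fun ξ i j hij => supIic_mono_left (hGanti hij)) hdrop
  rw [mk_Iio_ordinal, card_ord] at hcard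
  have hκ' : ℵ₀ ≤ Cardinal.lift.{u + 1} κ := by simpa using hκ
  have := hcard.trans ((mul_le_mul_left (he α hαS).2 _).trans (mul_aleph0_eq hκ').le)
  exact (Order.lt_succ_of_not_isMax (not_isMax κ)).not_ge (lift_le.1 this)

theorem exists_club_guessing_general (κ lam : Cardinal.{0}) (hκ : κ.IsRegular)
    (hlam : lam.IsRegular) (hsucc : Order.succ κ < lam)
    (S : Set Ordinal) (hS : S ⊆ {α : Ordinal | α < lam.ord ∧ α.cof = κ})
    (hstat : IsStationaryIn S lam.ord) :
    ∃ C : Ordinal → Set Ordinal,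
      (∀ α ∈ S, IsClubIn (C α) α ∧ setOtp (C α) = Ordinal.lift.{1} κ.ord) ∧
      ∀ D : Set Ordinal, IsClubIn D lam.ord →
        IsStationaryIn {α ∈ S | C α ⊆ D} lam.ord := by
  have hcof : ∀ α ∈ S, Order.IsSuccPrelimit α := fun α hα =>
    (Ordinal.one_lt_cof_iff.1 ((hS hα).2 ▸ one_lt_aleph0.trans_le hκ.aleph0_le)).isSuccPrelimit
  choose! e he using fun α hα => exists_isClubIn_setOtp_eq α (hcof α hα)
  have he_card : ∀ α ∈ S, #(e α) ≤ Cardinal.lift.{1} κ := fun α hα => by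
    have h := congrArg Ordinal.card (he α hα).2
    rw [setOtp, Ordinal.card_type, ← Ordinal.lift_card, card_ord, (hS hα).2] at h
    exact h.le
  obtain ⟨E, hE, hguess⟩ := exists_isClubIn_forall_isStationaryIn_clubProjSeq hκ.aleph0_le
    (by rwa [hlam.cof_ord]) hstat fun α hα => ⟨(he α hα).1.1, he_card α hα⟩
  refine ⟨clubProjSeq e E, fun α hα => ?_, hguess⟩
  rw [← (hS hα).2]
  exact isClubIn_clubProjSeq hE (hS hα).1 (he α hα)

/-- (Shelah) If `κ < λ` are regular cardinals with `κ⁺ < λ` and `S ⊆ S^λ_κ` is stationary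
in `λ`, then there is a club-guessing sequence on `S`: a sequence `⟨C_α : α ∈ S⟩` with each
`C_α` a club in `α` of order type `κ`, such that for every club `D ⊆ λ` the set of `α ∈ S`
with `C_α ⊆ D` is stationary in `λ`. -/
theorem exists_club_guessing (κ lam : Cardinal.{0}) (hκ : κ.IsRegular)
    (hlam : lam.IsRegular) (hlt : κ < lam) (hsucc : Order.succ κ < lam)
    (S : Set Ordinal) (hS : S ⊆ {α : Ordinal | α < lam.ord ∧ α.cof = κ})
    (hstat : IsStationaryIn S lam.ord) :
    ∃ C : Ordinal → Set Ordinal,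
      (∀ α ∈ S, IsClubIn (C α) α ∧ setOtp (C α) = Ordinal.lift.{1} κ.ord) ∧
      ∀ D : Set Ordinal, IsClubIn D lam.ord →
        IsStationaryIn {α ∈ S | C α ⊆ D} lam.ord :=
  exists_club_guessing_general κ lam hκ hlam hsucc S hS hstat
end

section
/- Suppose κ < λ are regular cardinals, S ⊆ S^λ_κ is stationary in λ, and ⟨C_α : α ∈ S⟩ is a club-guessing sequence on S. Suppose moreover that μ < λ is a cardinal and S = ⋃_{η<μ} S_η. Then there is some η < μ such that ⟨C_α : α ∈ S_η⟩ is a club-guessing sequence on S_η. -/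
open Cardinal

/-!
Suppose no piece `T η` guesses clubs: then each comes with clubs `D η` and `E η` such that no
`α ∈ T η ∩ E η` has `C α ⊆ D η`. Since `λ` is regular and `μ < λ`, the intersections `D` of all
`D η` and `E` of all `E η` are again clubs. Guessing `D` on `S` yields `α ∈ S ∩ E` with `C α ⊆ D`,
and `α` lies in some `T η`, a contradiction.
-/

open Order Set

universe u v

/-! Clubs in `l` are moved to Mathlib's `IsClub` on the well-order `Iio l`, where
`IsClub.iInter` intersects fewer than `cof l` of them. -/

namespace IsClubIn

variable {D : Set Ordinal.{v}} {l : Ordinal.{v}}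

theorem isClub_preimage (hD : IsClubIn D l) : IsClub (Subtype.val ⁻¹' D : Set (Iio l)) := by
  refine ⟨fun t ht htne _ a ha => ?_, fun x => ?_⟩
  · by_cases hat : a ∈ t
    · exact ht hat
    obtain ⟨x, hx⟩ := htne
    have hlt : ∀ y ∈ t, y < a := fun y hy => (ha.1 hy).lt_of_ne (ne_of_mem_of_not_mem hy hat)
    have hsup : sSup (D ∩ Iio a.1) = a.1 := by
      refine le_antisymm (csSup_le' fun y hy => hy.2.le) (le_of_forall_lt fun b hb => ?_)
      obtain ⟨y, hyt, hby⟩ : ∃ y ∈ t, b < y.1 := by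
        by_contra! h
        have hub : (⟨b, hb.trans a.2⟩ : Iio l) ∈ upperBounds t := fun y hy => h y hy
        exact hb.not_ge (ha.2 hub)
      exact hby.trans_le (le_csSup ⟨a, fun z hz => hz.2.le⟩ ⟨ht hyt, hlt y hyt⟩)
    exact hD.2.2 a a.2 (ne_bot_of_gt (hlt x hx)) hsup
  · obtain ⟨b, hb, hxb⟩ := hD.2.1 x x.2
    exact ⟨⟨b, hD.1 hb⟩, hb, hxb.le⟩

theorem _root_.IsClub.isClubIn_image (hl : IsSuccLimit l) {s : Set (Iio l)} (hs : IsClub s) :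
    IsClubIn (Subtype.val '' s) l := by
  refine ⟨by rintro _ ⟨x, -, rfl⟩; exact x.2, fun a ha => ?_, fun a ha ha0 hsup => ?_⟩
  · obtain ⟨y, hy, hay⟩ := hs.isCofinal ⟨succ a, hl.succ_lt ha⟩
    exact ⟨y, ⟨y, hy, rfl⟩, (lt_succ a).trans_le hay⟩
  · set t : Set (Iio l) := {x ∈ s | x.1 < a}
    have himage : Subtype.val '' s ∩ Iio a = Subtype.val '' t := by
      ext; simp [t]
    rw [himage] at hsup
    have htne : t.Nonempty := by
      by_contra h
      rw [not_nonempty_iff_eq_empty.1 h, image_empty, csSup_empty] at hsup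
      exact ha0 hsup.symm
    have hlub : IsLUB t ⟨a, ha⟩ := by
      refine ⟨fun x hx => hx.2.le, fun u hu => ?_⟩
      change a ≤ u.1
      rw [← hsup]
      exact csSup_le (htne.image _) (by rintro _ ⟨x, hx, rfl⟩; exact hu hx)
    exact ⟨_, hs.isLUB_mem (sep_subset _ _) htne hlub, rfl⟩

end IsClubIn

theorem IsClubIn.iInter {ι : Type u} {f : ι → Set Ordinal.{v}} {l : Ordinal.{v}}
    (hl : ℵ₀ < l.cof) (hι : Cardinal.lift.{v} #ι < Cardinal.lift.{u} l.cof)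
    (hf : ∀ i, IsClubIn (f i) l) : IsClubIn (Iio l ∩ ⋂ i, f i) l := by
  have hcof : Order.cof (Iio l) = Cardinal.lift.{v + 1} l.cof := by
    rw [Ordinal.cof_Iio, Ordinal.lift_cof]
  have hclub : IsClub (⋂ i, Subtype.val ⁻¹' f i : Set (Iio l)) := by
    refine IsClub.iInter ?_ ?_ fun i => (hf i).isClub_preimage
    · rw [hcof, ← lift_aleph0.{v + 1, v}, Ne, lift_inj]
      exact hl.ne'
    · rw [hcof]
      simpa only [lift_lift, lift_umax] using (lift_lt.{max u v, v + 1}).2 hι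
  have himage : Iio l ∩ ⋂ i, f i = Subtype.val '' ⋂ i, (Subtype.val ⁻¹' f i : Set (Iio l)) := by
    ext x; simp [and_comm]
  rw [himage]
  exact hclub.isClubIn_image (Ordinal.one_lt_cof_iff.1 (one_lt_aleph0.trans hl))

def GuessesClubs (C : Ordinal → Set Ordinal) (S : Set Ordinal) (l : Ordinal) : Prop :=
  ∀ D : Set Ordinal, IsClubIn D l → IsStationaryIn {α ∈ S | C α ⊆ D} l

theorem GuessesClubs.exists_of_iUnion {ι : Type u} {C : Ordinal.{v} → Set Ordinal.{v}}
    {S : ι → Set Ordinal.{v}} {l : Ordinal.{v}} (hl : ℵ₀ < l.cof)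
    (hι : Cardinal.lift.{v} #ι < Cardinal.lift.{u} l.cof) (h : GuessesClubs C (⋃ i, S i) l) :
    ∃ i, GuessesClubs C (S i) l := by
  by_contra! hS
  simp only [GuessesClubs, IsStationaryIn, not_forall, not_nonempty_iff_eq_empty] at hS
  choose D hD E hE hDE using hS
  obtain ⟨α, ⟨hαS, hαD⟩, hαE⟩ := h _ (IsClubIn.iInter hl hι hD) _ (IsClubIn.iInter hl hι hE)
  obtain ⟨i, hαi⟩ := mem_iUnion.1 hαS
  have hα : α ∈ {α ∈ S i | C α ⊆ D i} ∩ E i :=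
    ⟨⟨hαi, hαD.trans (inter_subset_right.trans (iInter_subset _ i))⟩, mem_iInter.1 hαE.2 i⟩
  simp [hDE i] at hα

theorem club_guessing_decomposition_general (κ lam μ : Cardinal.{0}) (hκ : κ.IsRegular)
    (hlam : lam.IsRegular) (hlt : κ < lam)
    (S : Set Ordinal)
    (C : Ordinal → Set Ordinal)
    (hguess : ∀ D : Set Ordinal, IsClubIn D lam.ord →
      IsStationaryIn {α ∈ S | C α ⊆ D} lam.ord)
    (hμ : μ < lam) (T : Ordinal → Set Ordinal)
    (hT : S = ⋃ η ∈ Set.Iio μ.ord, T η) :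
    ∃ η < μ.ord, ∀ D : Set Ordinal, IsClubIn D lam.ord →
      IsStationaryIn {α ∈ T η | C α ⊆ D} lam.ord := by
  have hcof : lam.ord.cof = lam := hlam.cof_ord
  have hl : ℵ₀ < lam.ord.cof := by rw [hcof]; exact hκ.aleph0_le.trans_lt hlt
  have hι : Cardinal.lift.{0} #(Iio μ.ord) < Cardinal.lift.{1} lam.ord.cof := by
    rwa [Cardinal.mk_Iio_ordinal, Cardinal.card_ord, hcof, lift_lift, lift_lt]
  rw [hT, biUnion_eq_iUnion] at hguess
  obtain ⟨⟨η, hη⟩, hη_guess⟩ := GuessesClubs.exists_of_iUnion hl hι hguess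
  exact ⟨η, hη, hη_guess⟩

/-- If `⟨C_α : α ∈ S⟩` is a club-guessing sequence on a stationary `S ⊆ S^λ_κ`, and
`S = ⋃_{η < μ} S_η` with `μ < λ` a cardinal, then for some `η < μ`, `⟨C_α : α ∈ S_η⟩` is a
club-guessing sequence on `S_η`. -/
theorem club_guessing_decomposition (κ lam μ : Cardinal.{0}) (hκ : κ.IsRegular)
    (hlam : lam.IsRegular) (hlt : κ < lam)
    (S : Set Ordinal) (hS : S ⊆ {α : Ordinal | α < lam.ord ∧ α.cof = κ})
    (hstat : IsStationaryIn S lam.ord)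
    (C : Ordinal → Set Ordinal)
    (hC : ∀ α ∈ S, IsClubIn (C α) α ∧ setOtp (C α) = Ordinal.lift.{1} κ.ord)
    (hguess : ∀ D : Set Ordinal, IsClubIn D lam.ord →
      IsStationaryIn {α ∈ S | C α ⊆ D} lam.ord)
    (hμ : μ < lam) (T : Ordinal → Set Ordinal)
    (hT : S = ⋃ η ∈ Set.Iio μ.ord, T η) :
    ∃ η < μ.ord, ∀ D : Set Ordinal, IsClubIn D lam.ord →
      IsStationaryIn {α ∈ T η | C α ⊆ D} lam.ord :=
  club_guessing_decomposition_general κ lam μ hκ hlam hlt S C hguess hμ T hT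
end

section
/- Assume the diamond principle ♦ on ω₁ (there is a sequence ⟨A_α : α < ω₁⟩ with A_α ⊆ α such that for every A ⊆ ω₁ the set {α < ω₁ : A ∩ α = A_α} is stationary in ω₁). Then there exists a sequence ⟨(C_α, f_α) : α ∈ S⟩, where S = S^{ω₁}_ω, such that: for every α ∈ S, C_α is a cofinal subset of α of order type ω and f_α : S ∩ α → ℕ; and for every club D ⊆ ω₁ and every function f : S → ℕ, the set of α ∈ S such that C_α ⊆ D and f restricted to S ∩ α equals f_α is stationary in ω₁. -/
open Cardinal

/-!
Code a club `D` and a colouring `f` into the single set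
`B = {ω·β : β ∈ D} ∪ {ω·β + (f β + 1) : β < ω₁}`. The points `α` closed under
`β ↦ ω·(β + 1)` that are limits of `D` and of a given club `E` form a club, so `♦` guesses `B`
at some such `α`. There `A α` decodes to `D ∩ α` and to `f ↾ α`, because `(β, n) ↦ ω·β + n`
is injective. Hence `C_α` is taken as an `ω`-sequence cofinal in `α` inside the decoded club
whenever that club is cofinal in `α`, and `f_α` is read off `A α`.
-/

open Ordinal Order Set Filter

universe u v

lemma sSup_eq_iff_of_subset_Iio {T : Set Ordinal.{u}} {a : Ordinal.{u}} (hT : T ⊆ Iio a) :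
    sSup T = a ↔ ∀ x < a, ∃ t ∈ T, x < t := by
  have hbdd : BddAbove T := ⟨a, fun t ht => (hT ht).le⟩
  refine ⟨?_, fun h => le_antisymm (csSup_le' fun t ht => (hT ht).le)
    (le_of_forall_lt fun x hx => ?_)⟩
  · rintro rfl x hx
    exact (lt_csSup_iff' hbdd).1 hx
  · obtain ⟨t, ht, hxt⟩ := h x hx
    exact hxt.trans_le (le_csSup hbdd ht)

lemma IsStationaryIn.mono {S S' : Set Ordinal} {l : Ordinal} (h : IsStationaryIn S l)
    (hSS' : S ⊆ S') : IsStationaryIn S' l :=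
  fun D hD => (h D hD).mono (inter_subset_inter_left D hSS')

section Club

variable {D : Set Ordinal.{u}} {l : Ordinal.{u}}

lemma IsClubIn.mem_of_forall_lt_exists {a : Ordinal} (hD : IsClubIn D l) (ha : a < l)
    (h0 : 0 < a) (h : ∀ x < a, ∃ d ∈ D, x < d ∧ d < a) : a ∈ D :=
  hD.2.2 a ha h0.ne' <| (sSup_eq_iff_of_subset_Iio inter_subset_right).2 fun x hx =>
    let ⟨d, hd, hxd, hda⟩ := h x hx
    ⟨d, ⟨hd, hda⟩, hxd⟩

noncomputable def nextIn (D : Set Ordinal) (β : Ordinal) : Ordinal := sInf {d | d ∈ D ∧ β < d}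

lemma IsClubIn.nextIn_mem {β : Ordinal} (hD : IsClubIn D l) (hβ : β < l) :
    nextIn D β ∈ D ∧ β < nextIn D β :=
  csInf_mem (hD.2.1 β hβ)

lemma IsClubIn.nextIn_lt {β : Ordinal} (hD : IsClubIn D l) (hβ : β < l) : nextIn D β < l :=
  hD.1 (hD.nextIn_mem hβ).1

lemma IsClubIn.exists_between_of_nextIn_lt {α : Ordinal} (hD : IsClubIn D l) (hα : α < l)
    (h : ∀ β < α, nextIn D β < α) : ∀ β < α, ∃ d ∈ D, β < d ∧ d < α := fun β hβ =>
  ⟨_, (hD.nextIn_mem (hβ.trans hα)).1, (hD.nextIn_mem (hβ.trans hα)).2, h β hβ⟩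

end Club

lemma countable_Iio_of_lt_omega_one {α : Ordinal.{u}} (hα : α < ω₁) : (Iio α).Countable := by
  rw [← le_aleph0_iff_set_countable, Cardinal.mk_Iio_ordinal, lift_le_aleph0, ← lt_succ_iff,
    succ_aleph0, ← lt_omega_iff_card_lt]
  exact hα

def closurePoints (g : Ordinal.{u} → Ordinal.{u}) (l : Ordinal.{u}) : Set Ordinal.{u} :=
  {x | x < l ∧ 0 < x ∧ ∀ β < x, g β < x}

lemma isClubIn_closurePoints {g : Ordinal.{u} → Ordinal.{u}} (hg : ∀ β < ω₁, g β < ω₁) :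
    IsClubIn (closurePoints g ω₁) ω₁ := by
  refine ⟨fun x hx => hx.1, fun a ha => ?_, fun a ha h0 hsup => ⟨ha, pos_iff_ne_zero.2 h0, ?_⟩⟩
  · -- `h y` bounds `g` on `Iio y`, so the supremum of the iterates of `h` is closed under `g`.
    set h : Ordinal.{u} → Ordinal.{u} := fun y => succ (y ⊔ ⨆ β : Iio y, g β)
    have hgh (y : Ordinal) : ∀ β < y, g β < h y := fun β hβ =>
      lt_succ_iff.2 (le_sup_of_le_right (Ordinal.le_iSup (fun β : Iio y => g β) ⟨β, hβ⟩))
    have hh : ∀ y < ω₁, h y < ω₁ := fun y hy =>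
      have := (countable_Iio_of_lt_omega_one hy).to_subtype
      (isSuccLimit_omega 1).succ_lt (max_lt hy (iSup_lt_omega_one fun β => hg β (β.2.trans hy)))
    have han : a < nfp h a := (lt_succ_of_le le_sup_left).trans_le (iterate_le_nfp h a 1)
    refine ⟨nfp h a, ⟨nfp_lt_ord (by simp) hh ha, zero_le.trans_lt han, fun β hβ => ?_⟩, han⟩
    obtain ⟨n, hn⟩ := lt_nfp_iff.1 hβ
    exact (hgh _ β hn).trans_le
      (by simpa [← Function.iterate_succ_apply'] using iterate_le_nfp h a (n + 1))
  · intro β hβ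
    obtain ⟨y, ⟨hy, hya⟩, hβy⟩ := (sSup_eq_iff_of_subset_Iio inter_subset_right).1 hsup β hβ
    exact (hy.2.2 β hβy).trans hya

lemma exists_strictMono_tendsto_atTop (β : Type*) [LinearOrder β] [Nonempty β] [NoMaxOrder β]
    [Countable β] : ∃ u : ℕ → β, StrictMono u ∧ Tendsto u atTop atTop := by
  have := (atTop_countable_basis (α := β)).isCountablyGenerated
  obtain ⟨xs, -, hxs⟩ := exists_seq_monotone_tendsto_atTop_atTop β
  obtain ⟨φ, hφ, hxsφ⟩ := strictMono_subseq_of_tendsto_atTop hxs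
  exact ⟨xs ∘ φ, hxsφ, hxs.comp hφ.tendsto_atTop⟩

lemma setOtp_range_of_strictMono_s12 {g : ℕ → Ordinal.{u}} (hg : StrictMono g) :
    setOtp (range g) = ω := by
  have h := Ordinal.lift_type_eq.{u+1, 0, u+1} (r := ((· < ·) : range g → range g → Prop))
    (s := ((· < ·) : ℕ → ℕ → Prop)) |>.2 ⟨(hg.orderIso g).symm.toRelIsoLT⟩
  rwa [type_nat_lt, lift_omega0, Ordinal.lift_id] at h

def IsLadder (C : Set Ordinal) (α : Ordinal) : Prop :=
  C ⊆ Iio α ∧ sSup C = α ∧ setOtp C = ω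

lemma exists_isLadder_subset {T : Set Ordinal.{u}} {α : Ordinal.{u}} (hTc : T.Countable)
    (hT : T ⊆ Iio α) (hsup : sSup T = α) (hα : 0 < α) : ∃ C ⊆ T, IsLadder C α := by
  have hcof := (sSup_eq_iff_of_subset_Iio hT).1 hsup
  obtain ⟨t₀, ht₀, -⟩ := hcof 0 hα
  have : Countable T := hTc.to_subtype
  have : Nonempty T := ⟨⟨t₀, ht₀⟩⟩
  have : NoMaxOrder T := ⟨fun t => let ⟨t', ht', h⟩ := hcof t (hT t.2); ⟨⟨t', ht'⟩, h⟩⟩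
  obtain ⟨u, hu, hlim⟩ := exists_strictMono_tendsto_atTop T
  have hrange : range (Subtype.val ∘ u) ⊆ T := range_subset_iff.2 fun n => (u n).2
  refine ⟨_, hrange, hrange.trans hT,
    (sSup_eq_iff_of_subset_Iio (hrange.trans hT)).2 fun x hx => ?_,
    setOtp_range_of_strictMono_s12 ((Subtype.strictMono_coe _).comp hu)⟩
  obtain ⟨t, ht, hxt⟩ := hcof x hx
  obtain ⟨n, hn⟩ := tendsto_atTop_atTop.1 hlim ⟨t, ht⟩
  exact ⟨_, mem_range_self n, hxt.trans_le (hn n le_rfl)⟩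

lemma omega0_mul_add_natCast_injective :
    Function.Injective fun p : Ordinal.{u} × ℕ => ω * p.1 + p.2 := by
  rintro ⟨β, m⟩ ⟨γ, n⟩ h
  have hm : (m : Ordinal.{u}) < ω := natCast_lt_omega0 m
  have hn : (n : Ordinal.{u}) < ω := natCast_lt_omega0 n
  have hβγ : β = γ := by
    simpa [mul_add_div _ omega0_ne_zero, div_eq_zero_of_lt hm, div_eq_zero_of_lt hn] using
      congrArg (· / ω) h
  have hmn : m = n := by
    simpa [mul_add_mod_self, mod_eq_of_lt hm, mod_eq_of_lt hn] using congrArg (· % ω) h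
  rw [hβγ, hmn]

noncomputable def pairCode (D : Set Ordinal.{u}) (f : Ordinal.{u} → ℕ) : Set Ordinal.{u} :=
  (fun p : Ordinal × ℕ => ω * p.1 + p.2) '' {p | (p.1 ∈ D ∧ p.2 = 0) ∨ p.2 = f p.1 + 1}

lemma mem_pairCode_iff {D : Set Ordinal.{u}} {f : Ordinal.{u} → ℕ} {β : Ordinal.{u}}
    {n : ℕ} : ω * β + n ∈ pairCode D f ↔ (β ∈ D ∧ n = 0) ∨ n = f β + 1 :=
  omega0_mul_add_natCast_injective.mem_set_image (a := (β, n))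

section Guessing

variable (A : Ordinal.{u} → Set Ordinal.{u})

def clubGuess (α : Ordinal) : Set Ordinal := {β | β < α ∧ ω * β ∈ A α}

noncomputable def colorGuess (α β : Ordinal) : ℕ :=
  Classical.epsilon fun n : ℕ => ω * β + ((n + 1 : ℕ) : Ordinal) ∈ A α

noncomputable def ladderGuess (α : Ordinal) : Set Ordinal :=
  Classical.epsilon fun C => IsLadder C α ∧ (sSup (clubGuess A α) = α → C ⊆ clubGuess A α)

lemma ladderGuess_spec {α : Ordinal.{u}} (hα : α < ω₁) (hcof : α.cof = ℵ₀) :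
    IsLadder (ladderGuess A α) α ∧
      (sSup (clubGuess A α) = α → ladderGuess A α ⊆ clubGuess A α) := by
  have hlim : IsSuccLimit α := one_lt_cof_iff.1 (hcof ▸ one_lt_aleph0)
  apply Classical.epsilon_spec (p := fun C => IsLadder C α ∧ _)
  by_cases hsup : sSup (clubGuess A α) = α
  · obtain ⟨C, hCT, hC⟩ := exists_isLadder_subset
      ((countable_Iio_of_lt_omega_one hα).mono fun β hβ => hβ.1) (fun β hβ => hβ.1) hsup
      hlim.bot_lt
    exact ⟨C, hC, fun _ => hCT⟩
  · obtain ⟨C, -, hC⟩ := exists_isLadder_subset (countable_Iio_of_lt_omega_one hα) subset_rfl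
      hlim.sSup_Iio hlim.bot_lt
    exact ⟨C, hC, fun h => absurd h hsup⟩

section Decoding

variable {A} {D : Set Ordinal.{u}} {f : Ordinal.{u} → ℕ} {α : Ordinal.{u}}
  (hA : pairCode D f ∩ Iio α = A α) (hα : ∀ β < α, ω * (β + 1) < α)
include hA hα

lemma mem_iff_of_pairCode_inter_eq {β : Ordinal} (hβ : β < α) (n : ℕ) :
    ω * β + n ∈ A α ↔ (β ∈ D ∧ n = 0) ∨ n = f β + 1 := by
  have hlt : ω * β + n < ω * (β + 1) := by
    rw [mul_add_one]
    exact (add_lt_add_iff_left _).2 (natCast_lt_omega0 n)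
  rw [← hA, mem_inter_iff, mem_pairCode_iff, and_iff_left (mem_Iio.2 (hlt.trans (hα β hβ)))]

lemma clubGuess_eq_of_pairCode_inter_eq : clubGuess A α = D ∩ Iio α := by
  ext β
  refine ⟨fun ⟨hβ, h⟩ => ⟨?_, hβ⟩, fun ⟨hD, hβ⟩ => ⟨hβ, ?_⟩⟩
  · simpa using (mem_iff_of_pairCode_inter_eq hA hα hβ 0).1 (by simpa using h)
  · simpa using (mem_iff_of_pairCode_inter_eq hA hα hβ 0).2 (Or.inl ⟨hD, rfl⟩)

lemma colorGuess_eq_of_pairCode_inter_eq {β : Ordinal} (hβ : β < α) :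
    colorGuess A α β = f β := by
  have key (n : ℕ) : ω * β + ((n + 1 : ℕ) : Ordinal) ∈ A α ↔ n = f β := by
    simpa using mem_iff_of_pairCode_inter_eq hA hα hβ (n + 1)
  exact (key _).1 <| Classical.epsilon_spec
    (p := fun n : ℕ => ω * β + ((n + 1 : ℕ) : Ordinal) ∈ A α) ⟨f β, (key _).2 rfl⟩

end Decoding

theorem isStationaryIn_guesses
    (hA : ∀ B ⊆ Iio ω₁, IsStationaryIn {α | α < ω₁ ∧ B ∩ Iio α = A α} ω₁)
    {D : Set Ordinal} (hD : IsClubIn D ω₁) (f : Ordinal → ℕ) :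
    IsStationaryIn {α | α < ω₁ ∧ α.cof = ℵ₀ ∧ ladderGuess A α ⊆ D ∧
      ∀ β < α, colorGuess A α β = f β} ω₁ := by
  intro E hE
  set g := fun β => ω * (β + 1) ⊔ nextIn D β ⊔ nextIn E β
  have hg : ∀ β < ω₁, g β < ω₁ := fun β hβ => max_lt (max_lt
    (isPrincipal_mul_omega 1 omega0_lt_omega_one ((isSuccLimit_omega 1).add_one_lt hβ))
    (hD.nextIn_lt hβ)) (hE.nextIn_lt hβ)
  obtain ⟨α, ⟨hα, hBA⟩, -, hα0, hgα⟩ :=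
    hA (pairCode D f ∩ Iio ω₁) inter_subset_right _ (isClubIn_closurePoints hg)
  have hA' : pairCode D f ∩ Iio α = A α := by
    rw [← hBA, inter_assoc, Iio_inter_Iio, min_eq_right hα.le]
  have hcode : ∀ β < α, ω * (β + 1) < α := fun β hβ =>
    (le_sup_left.trans le_sup_left).trans_lt (hgα β hβ)
  have hDα := hD.exists_between_of_nextIn_lt hα fun β hβ =>
    (le_sup_right.trans le_sup_left).trans_lt (hgα β hβ)
  have hEα := hE.exists_between_of_nextIn_lt hα fun β hβ => le_sup_right.trans_lt (hgα β hβ)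
  have hcof : α.cof = ℵ₀ := cof_eq_aleph0_of_isSuccLimit (isSuccLimit_iff.2 ⟨hα0.ne',
    isSuccPrelimit_of_succ_lt fun β hβ => let ⟨_, _, hβd, hdα⟩ := hDα β hβ
      (succ_le_of_lt hβd).trans_lt hdα⟩) hα
  have hT := clubGuess_eq_of_pairCode_inter_eq hA' hcode
  have hsup : sSup (clubGuess A α) = α := by
    rw [hT]
    exact (sSup_eq_iff_of_subset_Iio inter_subset_right).2 fun β hβ =>
      let ⟨d, hd, hβd, hdα⟩ := hDα β hβ
      ⟨d, ⟨hd, hdα⟩, hβd⟩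
  refine ⟨α, ⟨hα, hcof, ?_, fun β hβ => colorGuess_eq_of_pairCode_inter_eq hA' hcode hβ⟩,
    hE.mem_of_forall_lt_exists hα hα0 hEα⟩
  exact ((ladderGuess_spec A hα hcof).2 hsup).trans (hT ▸ inter_subset_left)

end Guessing

def Diamond (l : Ordinal.{u}) : Prop :=
  ∃ A : Ordinal → Set Ordinal, (∀ α < l, A α ⊆ Iio α) ∧
    ∀ B ⊆ Iio l, IsStationaryIn {α | α < l ∧ B ∩ Iio α = A α} l

section Transfer

variable {l : Ordinal.{u}} {l' : Ordinal.{v}}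

def comapIio (e : Iio l ≃o Iio l') (S : Set Ordinal.{v}) : Set Ordinal.{u} :=
  {x | ∃ h : x ∈ Iio l, (e ⟨x, h⟩ : Ordinal) ∈ S}

lemma comapIio_subset (e : Iio l ≃o Iio l') (S : Set Ordinal.{v}) : comapIio e S ⊆ Iio l :=
  fun _ ⟨h, _⟩ => h

lemma coe_symm_lt_coe_iff (e : Iio l ≃o Iio l') (a : Iio l) (b : Iio l') :
    (e.symm b : Ordinal) < a ↔ (b : Ordinal) < e a := by
  rw [Subtype.coe_lt_coe, OrderIso.symm_apply_lt, Subtype.coe_lt_coe]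

lemma coe_lt_coe_symm_iff (e : Iio l ≃o Iio l') (a : Iio l) (b : Iio l') :
    (a : Ordinal) < e.symm b ↔ (e a : Ordinal) < b := by
  rw [Subtype.coe_lt_coe, OrderIso.lt_symm_apply, Subtype.coe_lt_coe]

lemma IsClubIn.comapIio (e : Iio l ≃o Iio l') {D : Set Ordinal.{v}} (hD : IsClubIn D l') :
    IsClubIn (comapIio e D) l := by
  refine ⟨comapIio_subset e D, fun a ha => ?_, fun a ha h0 hsup => ⟨ha, ?_⟩⟩
  · obtain ⟨b, hb, hab⟩ := hD.2.1 _ (e ⟨a, ha⟩).2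
    exact ⟨e.symm ⟨b, hD.1 hb⟩, ⟨(e.symm _).2, by simpa using hb⟩,
      (coe_lt_coe_symm_iff e ⟨a, ha⟩ _).2 hab⟩
  · have h0a : 0 < a := pos_iff_ne_zero.2 h0
    refine hD.mem_of_forall_lt_exists (e ⟨a, ha⟩).2
      (zero_le.trans_lt (e.lt_iff_lt.2 (Subtype.mk_lt_mk.2 h0a) : e ⟨0, h0a.trans ha⟩ < _))
      fun y hy => ?_
    obtain ⟨t, ⟨⟨htl, htD⟩, hta⟩, hyt⟩ := (sSup_eq_iff_of_subset_Iio inter_subset_right).1 hsup _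
      ((coe_symm_lt_coe_iff e ⟨a, ha⟩ ⟨y, hy.trans (e _).2⟩).2 hy)
    exact ⟨_, htD, (coe_symm_lt_coe_iff e ⟨t, htl⟩ _).1 hyt,
      Subtype.coe_lt_coe.2 (e.lt_iff_lt.2 (Subtype.mk_lt_mk.2 hta))⟩

lemma Diamond.of_orderIso (e : Iio l ≃o Iio l') (h : Diamond l) : Diamond l' := by
  obtain ⟨A, hAsub, hA⟩ := h
  refine ⟨fun α => if hα : α < l' then comapIio e.symm (A (e.symm ⟨α, hα⟩)) else ∅, ?_, ?_⟩
  · intro α hα y hy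
    simp only [dif_pos hα] at hy
    obtain ⟨_, hyA⟩ := hy
    exact Subtype.coe_lt_coe.2
      (e.symm.lt_iff_lt.1 (Subtype.coe_lt_coe.1 (hAsub _ (e.symm _).2 hyA)))
  · intro B hB D hD
    obtain ⟨α, ⟨hα, hBA⟩, _, hαD⟩ := hA (comapIio e B) (comapIio_subset e B) _ (hD.comapIio e)
    refine ⟨e ⟨α, hα⟩, ⟨(e _).2, ?_⟩, hαD⟩
    simp only [dif_pos (show (e ⟨α, hα⟩ : Ordinal) < l' from (e _).2), Subtype.coe_eta,
      OrderIso.symm_apply_apply, ← hBA]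
    ext y
    constructor
    · rintro ⟨hyB, hyα⟩
      exact ⟨hB hyB, ⟨(e.symm _).2, by simpa using hyB⟩,
        (coe_symm_lt_coe_iff e ⟨α, hα⟩ _).2 hyα⟩
    · rintro ⟨hy, ⟨_, hyB⟩, hyα⟩
      exact ⟨by simpa using hyB, (coe_symm_lt_coe_iff e ⟨α, hα⟩ ⟨y, hy⟩).1 hyα⟩

lemma nonempty_orderIso_Iio_of_lift_eq {o : Ordinal.{u}} {o' : Ordinal.{v}}
    (h : Ordinal.lift.{v} o = Ordinal.lift.{u} o') : Nonempty (Iio o ≃o Iio o') := by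
  rw [← type_toType o, ← type_toType o', lift_type_eq.{u, v, 0}] at h
  obtain ⟨r⟩ := h
  exact ⟨ToType.mk.trans ((OrderIso.ofRelIsoLT r).trans ToType.mk.symm)⟩

end Transfer

/-- `♦` implies the existence of a sequence `⟨(C_α, f_α) : α ∈ S^{ω₁}_ω⟩` such that each
`C_α` is a cofinal subset of `α` of order type `ω` and `f_α : S ∩ α → ℕ`, and for every
club `D ⊆ ω₁` and every `f : S → ℕ`, the set of `α ∈ S` with `C_α ⊆ D` and
`f ↾ (S ∩ α) = f_α` is stationary in `ω₁`. -/
theorem diamond_gives_guessing_pairs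
    (hdiamond : ∃ A : Ordinal → Set Ordinal,
      (∀ α < (Cardinal.aleph 1).ord, A α ⊆ Set.Iio α) ∧
      ∀ B : Set Ordinal, B ⊆ Set.Iio (Cardinal.aleph 1).ord →
        IsStationaryIn {α | α < (Cardinal.aleph 1).ord ∧ B ∩ Set.Iio α = A α}
          (Cardinal.aleph 1).ord) :
    ∃ (C : Ordinal → Set Ordinal) (F : Ordinal → Ordinal → ℕ),
      (∀ α : Ordinal, α < (Cardinal.aleph 1).ord → α.cof = Cardinal.aleph0 →
        C α ⊆ Set.Iio α ∧ sSup (C α) = α ∧ setOtp (C α) = Ordinal.omega0) ∧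
      ∀ D : Set Ordinal, IsClubIn D (Cardinal.aleph 1).ord →
        ∀ f : Ordinal → ℕ,
          IsStationaryIn
            {α | α < (Cardinal.aleph 1).ord ∧ α.cof = Cardinal.aleph0 ∧ C α ⊆ D ∧
              ∀ β < α, β.cof = Cardinal.aleph0 → F α β = f β}
            (Cardinal.aleph 1).ord := by
  simp only [Cardinal.ord_aleph] at hdiamond ⊢
  -- The hypothesis and the conclusion live in independent universes.
  obtain ⟨e⟩ := nonempty_orderIso_Iio_of_lift_eq (o := ω₁) (o' := ω₁) (by simp)
  obtain ⟨A, -, hA⟩ := Diamond.of_orderIso e hdiamond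
  refine ⟨ladderGuess A, colorGuess A, fun α hα hcof => (ladderGuess_spec A hα hcof).1,
    fun D hD f => ?_⟩
  exact (isStationaryIn_guesses A hA hD f).mono fun α ⟨hα, hcof, hCD, hF⟩ =>
    ⟨hα, hcof, hCD, fun β hβ _ => hF β hβ⟩
end

section
/- Let k be a natural number and let G = (V, E) be a simple graph whose edge set decomposes as E = E' ∪ ⋃_{j<k} E_j, where each graph (V, E_j) contains no cycles and the graph (V, E') contains no odd cycles. Then χ(G) ≤ 2^{k+1}. -/
/-!
A graph without odd cycles has no odd closed walks either (an odd closed walk that is not a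
cycle splits into two shorter closed walks, one of them odd), so it is 2-colorable; so is every
forest. Coloring each vertex by the tuple of its colors in the `k + 1` pieces of the
decomposition is a proper coloring of their union with `2 ^ (k + 1)` colors.
-/

namespace SimpleGraph

variable {V : Type*} {G H : SimpleGraph V}

theorem Walk.exists_isCycle_odd_length {u : V} (w : G.Walk u u) (hw : Odd w.length) :
    ∃ (v : V) (c : G.Walk v v), c.IsCycle ∧ Odd c.length := by
  induction hn : w.length using Nat.strong_induction_on generalizing u with
  | _ n ih =>
  subst hn
  cases w with
  | nil => simp at hw
  | @cons _ b _ h p =>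
    by_cases hp : p.IsPath
    · by_cases he : s(u, b) ∈ p.edges
      · have := hp.length_eq_one_of_mem_edges (Sym2.eq_swap ▸ he)
        simp [this, Nat.odd_iff] at hw
      · exact ⟨u, _, (Walk.cons_isCycle_iff p h).2 ⟨hp, he⟩, hw⟩
    · -- A repeated vertex cuts out a nontrivial closed subwalk `c` of `p`.
      obtain ⟨x, c, ⟨pre, post, rfl⟩, hc⟩ :
          ∃ (x : V) (c : G.Walk x x), c.IsSubwalk p ∧ ¬c.Nil := by
        simpa [Walk.isPath_iff_isSubwalk_imp_nil] using hp
      have hc_pos : 0 < c.length := Walk.not_nil_iff_lt_length.1 hc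
      have hlen : (Walk.cons h ((pre.append c).append post)).length =
          (Walk.cons h (pre.append post)).length + c.length := by
        simp only [Walk.length_cons, Walk.length_append]
        omega
      rw [hlen] at hw
      by_cases hc_odd : Odd c.length
      · exact ih c.length (by rw [hlen, Walk.length_cons]; omega) c hc_odd rfl
      · have hrest_odd : Odd (Walk.cons h (pre.append post)).length :=
          (Nat.odd_add.1 hw).2 (Nat.not_odd_iff_even.1 hc_odd)
        exact ih _ (by rw [hlen]; omega) _ hrest_odd rfl

theorem colorable_two_of_forall_isCycle_not_odd
    (h : ∀ (v : V) (c : G.Walk v v), c.IsCycle → ¬Odd c.length) : G.Colorable 2 :=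
  two_colorable_iff_forall_loop_even.2 fun _ w => Nat.not_odd_iff_even.1 fun hw =>
    let ⟨v, c, hc, hc_odd⟩ := w.exists_isCycle_odd_length hw
    h v c hc hc_odd

theorem Colorable.sup {m n : ℕ} (hG : G.Colorable m) (hH : H.Colorable n) :
    (G ⊔ H).Colorable (m * n) := by
  obtain ⟨C₁⟩ := hG
  obtain ⟨C₂⟩ := hH
  let C : (G ⊔ H).Coloring (Fin m × Fin n) :=
    Coloring.mk (fun v => (C₁ v, C₂ v)) fun hab heq => by
      rcases hab with hab | hab
      · exact C₁.valid hab (congrArg Prod.fst heq)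
      · exact C₂.valid hab (congrArg Prod.snd heq)
  simpa using C.colorable

theorem Colorable.iSup {ι : Type*} [Fintype ι] {H : ι → SimpleGraph V} {n : ℕ}
    (hH : ∀ i, (H i).Colorable n) : (⨆ i, H i).Colorable (n ^ Fintype.card ι) := by
  classical
  let C : (⨆ i, H i).Coloring (ι → Fin n) :=
    Coloring.mk (fun v i => (hH i).some v) fun hab heq => by
      obtain ⟨i, hab⟩ := iSup_adj.1 hab
      exact (hH i).some.valid hab (congrFun heq i)
  simpa using C.colorable

end SimpleGraph

/-- If the edge set of `G` decomposes as `E' ∪ ⋃_{j<k} E_j`, where each graph `(V, E_j)` is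
acyclic and the graph `(V, E')` has no odd cycles, then `χ(G) ≤ 2^(k+1)`. -/
theorem colorable_of_decomposition {V : Type*} (k : ℕ) (G G' : SimpleGraph V)
    (Gj : Fin k → SimpleGraph V)
    (hacyclic : ∀ j : Fin k, (Gj j).IsAcyclic)
    (hodd : ∀ (v : V) (c : G'.Walk v v), c.IsCycle → ¬Odd c.length)
    (hunion : ∀ a b : V, G.Adj a b ↔ G'.Adj a b ∨ ∃ j : Fin k, (Gj j).Adj a b) :
    G.Colorable (2 ^ (k + 1)) := by
  have hle : G ≤ G' ⊔ ⨆ j, Gj j := fun a b hab => by simpa using (hunion a b).1 hab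
  have hcol := (SimpleGraph.colorable_two_of_forall_isCycle_not_odd hodd).sup
    (SimpleGraph.Colorable.iSup fun j => (hacyclic j).colorable_two)
  rw [Fintype.card_fin, ← pow_succ'] at hcol
  exact hcol.mono_left hle
end
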